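/- arXiv:2106.01338 — 6 statements merged into one kernel-verified Lean document; each statement's English description precedes it below -/
import Mathlib

section
/- For any a > 0, the two-dimensional Fourier transform of the function r ↦ e^{-a|r|}/(2π|r|) on ℝ² equals k ↦ 1/√(a² + |k|²). -/
open Real MeasureTheory Set

noncomputable section FourierExpAux


lemma aux1 {x : ℝ} (hx : 0 ≤ x) : x * Real.exp (-x) ≤ 1 := by
  rw [Real.exp_neg, mul_inv_le_iff₀ (Real.exp_pos x), one_mul]
  linarith [Real.add_one_le_exp x]

lemma aux2 {x : ℝ} (hx : 0 ≤ x) : x ^ 2 * Real.exp (-x) ≤ 4 := by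
  rw [Real.exp_neg, mul_inv_le_iff₀ (Real.exp_pos x)]
  have h := Real.add_one_le_exp (x / 2)
  have h2 : Real.exp (x / 2) ^ 2 = Real.exp x := by
    rw [← Real.exp_nat_mul]; ring_nf
  nlinarith [Real.exp_pos (x / 2)]

lemma auxt1 {q t : ℝ} (hq : 0 < q) (ht : 0 < t) :
    t⁻¹ * Real.exp (-(q / t)) ≤ 1 / q := by
  have hq1 : (q / t) * Real.exp (-(q / t)) ≤ 1 := aux1 (by positivity)
  rw [le_div_iff₀ hq]
  calc t⁻¹ * Real.exp (-(q/t)) * q = q / t * Real.exp (-(q/t)) := by ring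
    _ ≤ 1 := hq1

lemma auxt2 {q t : ℝ} (hq : 0 < q) (ht : 0 < t) :
    (t⁻¹) ^ 2 * Real.exp (-(q / t)) ≤ 4 / q ^ 2 := by
  have hq2 : (q / t) ^ 2 * Real.exp (-(q / t)) ≤ 4 := aux2 (by positivity)
  rw [le_div_iff₀ (by positivity : (0:ℝ) < q ^ 2)]
  calc t⁻¹ ^ 2 * Real.exp (-(q/t)) * q ^ 2 = (q / t) ^ 2 * Real.exp (-(q/t)) := by ring
    _ ≤ 4 := hq2

lemma bound32 {q t : ℝ} (hq : 0 < q) (ht : 0 < t) :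
    (t * Real.sqrt t)⁻¹ * Real.exp (-(q / t)) ≤ 1 / q + 4 / q ^ 2 := by
  have hst : 0 < Real.sqrt t := Real.sqrt_pos.mpr ht
  have key : (t * Real.sqrt t)⁻¹ ≤ t⁻¹ + (t⁻¹) ^ 2 := by
    rcases le_total 1 t with h | h
    · have h1 : 1 ≤ Real.sqrt t := by
        rw [show (1:ℝ) = Real.sqrt 1 by simp]; exact Real.sqrt_le_sqrt h
      have h2 : t ≤ t * Real.sqrt t := by nlinarith
      have h3 := inv_anti₀ ht h2
      nlinarith [sq_nonneg t⁻¹]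
    · have h1 : t ≤ Real.sqrt t := by
        nlinarith [Real.sq_sqrt ht.le, Real.sqrt_pos.mpr ht]
      have h2 : t ^ 2 ≤ t * Real.sqrt t := by nlinarith
      have h3 := inv_anti₀ (by positivity : (0:ℝ) < t ^ 2) h2
      have h4 : (t ^ 2)⁻¹ = (t⁻¹) ^ 2 := by rw [inv_pow]
      nlinarith [inv_pos.mpr ht]
  have he : 0 < Real.exp (-(q / t)) := Real.exp_pos _
  calc (t * Real.sqrt t)⁻¹ * Real.exp (-(q / t))
      ≤ (t⁻¹ + (t⁻¹) ^ 2) * Real.exp (-(q / t)) := mul_le_mul_of_nonneg_right key he.le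
    _ = t⁻¹ * Real.exp (-(q / t)) + (t⁻¹) ^ 2 * Real.exp (-(q / t)) := by ring
    _ ≤ 1 / q + 4 / q ^ 2 := add_le_add (auxt1 hq ht) (auxt2 hq ht)

lemma bound12 {q t : ℝ} (hq : 0 < q) (ht : 0 < t) :
    (Real.sqrt t)⁻¹ * Real.exp (-(q / t)) ≤ 1 + 1 / q := by
  have hst : 0 < Real.sqrt t := Real.sqrt_pos.mpr ht
  have key : (Real.sqrt t)⁻¹ ≤ 1 + t⁻¹ := by
    rcases le_total 1 t with h | h
    · have h1 : 1 ≤ Real.sqrt t := by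
        rw [show (1:ℝ) = Real.sqrt 1 by simp]; exact Real.sqrt_le_sqrt h
      have h2 : (Real.sqrt t)⁻¹ ≤ 1 := inv_le_one_of_one_le₀ h1
      nlinarith [inv_pos.mpr ht]
    · have h1 : t ≤ Real.sqrt t := by
        nlinarith [Real.sq_sqrt ht.le, Real.sqrt_pos.mpr ht]
      have h2 := inv_anti₀ ht h1
      nlinarith
  have he : Real.exp (-(q / t)) ≤ 1 := by
    rw [Real.exp_le_one_iff, neg_nonpos]; positivity
  have he' : 0 < Real.exp (-(q / t)) := Real.exp_pos _
  calc (Real.sqrt t)⁻¹ * Real.exp (-(q / t))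
      ≤ (1 + t⁻¹) * Real.exp (-(q / t)) := mul_le_mul_of_nonneg_right key he'.le
    _ = Real.exp (-(q / t)) + t⁻¹ * Real.exp (-(q / t)) := by ring
    _ ≤ 1 + 1 / q := add_le_add he (auxt1 hq ht)


section
variable {p q : ℝ}

lemma integrable_aux (hp : 0 < p) {w : ℝ → ℝ} (hw : ContinuousOn w (Ioi 0))
    {C : ℝ} (hwb : ∀ t, 0 < t → |w t| * Real.exp (-(q / t)) ≤ C) :
    IntegrableOn (fun t => w t * Real.exp (-(p * t + q / t))) (Ioi 0) := by
  have hg : IntegrableOn (fun t => C * Real.exp (-(p * t))) (Ioi 0) := by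
    have h0 := (exp_neg_integrableOn_Ioi 0 hp).const_mul C; simp only [neg_mul] at h0; exact h0
  apply Integrable.mono' hg
  · refine (hw.mul ?_).aestronglyMeasurable measurableSet_Ioi
    apply Real.continuous_exp.comp_continuousOn
    exact ((continuousOn_const.mul continuousOn_id).add
      (continuousOn_const.div continuousOn_id (fun x hx => ne_of_gt hx))).neg
  · rw [ae_restrict_iff' measurableSet_Ioi]
    filter_upwards with t ht
    have ht' : (0:ℝ) < t := ht
    have hee : Real.exp (-(p * t + q / t)) = Real.exp (-(p * t)) * Real.exp (-(q / t)) := by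
      rw [← Real.exp_add]; ring_nf
    rw [Real.norm_eq_abs, hee, abs_mul, abs_mul,
      abs_of_pos (Real.exp_pos _), abs_of_pos (Real.exp_pos _)]
    calc |w t| * (Real.exp (-(p * t)) * Real.exp (-(q / t)))
        = |w t| * Real.exp (-(q / t)) * Real.exp (-(p * t)) := by ring
      _ ≤ C * Real.exp (-(p * t)) :=
          mul_le_mul_of_nonneg_right (hwb t ht') (Real.exp_pos _).le

lemma cont32 : ContinuousOn (fun t : ℝ => (t * Real.sqrt t)⁻¹) (Ioi 0) := by
  apply ContinuousOn.inv₀ (continuousOn_id.mul Real.continuous_sqrt.continuousOn)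
  intro t ht
  have ht' : (0:ℝ) < t := ht
  exact mul_ne_zero ht'.ne' (Real.sqrt_pos.mpr ht').ne'

lemma cont12 : ContinuousOn (fun t : ℝ => (Real.sqrt t)⁻¹) (Ioi 0) := by
  apply ContinuousOn.inv₀ Real.continuous_sqrt.continuousOn
  intro t ht
  have ht' : (0:ℝ) < t := ht
  positivity

lemma integrable32 (hp : 0 < p) (hq : 0 < q) :
    IntegrableOn (fun t => (t * Real.sqrt t)⁻¹ * Real.exp (-(p * t + q / t))) (Ioi 0) := by
  refine integrable_aux hp cont32 (C := 1 / q + 4 / q ^ 2) (fun t ht => ?_)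
  rw [abs_of_pos (by positivity)]
  exact bound32 hq ht

lemma integrable12 (hp : 0 < p) (hq : 0 < q) :
    IntegrableOn (fun t => (Real.sqrt t)⁻¹ * Real.exp (-(p * t + q / t))) (Ioi 0) := by
  refine integrable_aux hp cont12 (C := 1 + 1 / q) (fun t ht => ?_)
  rw [abs_of_pos (by positivity)]
  exact bound12 hq ht

lemma symm_sub (hp : 0 < p) (hq : 0 < q) :
    ∫ t in Ioi 0, (t * Real.sqrt t)⁻¹ * Real.exp (-(p * t + q / t)) =
      Real.sqrt p / Real.sqrt q *
        ∫ t in Ioi 0, (Real.sqrt t)⁻¹ * Real.exp (-(p * t + q / t)) := by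
  have hp' : Real.sqrt p ≠ 0 := by positivity
  have hq' : Real.sqrt q ≠ 0 := by positivity
  set f : ℝ → ℝ := fun t => q / p * t⁻¹ with hf_def
  have himg : f '' Ioi 0 = Ioi 0 := by
    ext x
    simp only [mem_image, mem_Ioi]
    constructor
    · rintro ⟨t, ht, rfl⟩; positivity
    · intro hx
      refine ⟨q / p * x⁻¹, by positivity, ?_⟩
      simp only [hf_def]
      field_simp
  have hderiv : ∀ x ∈ Ioi 0, HasDerivWithinAt f (q / p * -(x ^ 2)⁻¹) (Ioi 0) x := by
    intro x hx
    exact ((hasDerivAt_inv (ne_of_gt hx)).const_mul (q / p)).hasDerivWithinAt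
  have hinj : InjOn f (Ioi 0) := by
    intro x hx y hy hxy
    have hqp : q / p ≠ 0 := by positivity
    exact inv_injective (mul_left_cancel₀ hqp hxy)
  have key := integral_image_eq_integral_abs_deriv_smul measurableSet_Ioi hderiv hinj
    (fun x => (x * Real.sqrt x)⁻¹ * Real.exp (-(p * x + q / x)))
  rw [himg] at key
  rw [key, ← integral_const_mul]
  apply setIntegral_congr_fun measurableSet_Ioi
  intro t ht
  have ht' : (0:ℝ) < t := ht
  have hst : (0:ℝ) < Real.sqrt t := Real.sqrt_pos.mpr ht'
  have hst' : Real.sqrt t ≠ 0 := ne_of_gt hst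
  have hft : f t = q / p * t⁻¹ := rfl
  have harg : p * f t + q / f t = p * t + q / t := by
    rw [hft]; field_simp; ring
  have h1 : Real.sqrt (f t) = Real.sqrt q * (Real.sqrt p)⁻¹ * (Real.sqrt t)⁻¹ := by
    rw [hft, show q / p * t⁻¹ = q * (p⁻¹ * t⁻¹) by ring, Real.sqrt_mul hq.le,
      Real.sqrt_mul (by positivity), Real.sqrt_inv, Real.sqrt_inv]
    ring
  show |q / p * -(t ^ 2)⁻¹| • ((f t * Real.sqrt (f t))⁻¹ * Real.exp (-(p * f t + q / f t))) = Real.sqrt p / Real.sqrt q * ((Real.sqrt t)⁻¹ * Real.exp (-(p * t + q / t)))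
  rw [smul_eq_mul, harg, show q / p * -(t ^ 2)⁻¹ = -(q / p * (t ^ 2)⁻¹) by ring,
    abs_neg, abs_of_pos (by positivity), hft, h1]
  have hts : Real.sqrt t ^ 2 = t := Real.sq_sqrt ht'.le
  have hps : Real.sqrt p ^ 2 = p := Real.sq_sqrt hp.le
  have hqs : Real.sqrt q ^ 2 = q := Real.sq_sqrt hq.le
  set st := Real.sqrt t
  set sp := Real.sqrt p
  set sq := Real.sqrt q
  rw [← hts, ← hps, ← hqs]
  field_simp
end


section
variable {p q : ℝ}

lemma glasser (hp : 0 < p) (hq : 0 < q) :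
    ∫ t in Ioi 0,
        (Real.sqrt p * (Real.sqrt t)⁻¹ + Real.sqrt q * (t * Real.sqrt t)⁻¹) *
          Real.exp (-(p * t + q / t))
      = 2 * Real.sqrt π * Real.exp (-(2 * Real.sqrt (p * q))) := by
  have hsp : (0:ℝ) < Real.sqrt p := Real.sqrt_pos.mpr hp
  have hsq : (0:ℝ) < Real.sqrt q := Real.sqrt_pos.mpr hq
  set φ : ℝ → ℝ := fun t => Real.sqrt p * Real.sqrt t - Real.sqrt q * (Real.sqrt t)⁻¹
    with hφ_def
  -- derivative
  have hderiv : ∀ x ∈ Ioi 0, HasDerivWithinAt φ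
      ((Real.sqrt p * (Real.sqrt x)⁻¹ + Real.sqrt q * (x * Real.sqrt x)⁻¹) / 2) (Ioi 0) x := by
    intro x hx
    have hx' : (0:ℝ) < x := hx
    have hsx : (0:ℝ) < Real.sqrt x := Real.sqrt_pos.mpr hx'
    have h1 : HasDerivAt (fun t : ℝ => Real.sqrt p * Real.sqrt t)
        (Real.sqrt p * (1 / (2 * Real.sqrt x))) x :=
      (Real.hasDerivAt_sqrt hx'.ne').const_mul _
    have h2 : HasDerivAt (fun t : ℝ => Real.sqrt q * (Real.sqrt t)⁻¹)
        (Real.sqrt q * (-(1 / (2 * Real.sqrt x)) / Real.sqrt x ^ 2)) x :=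
      ((Real.hasDerivAt_sqrt hx'.ne').inv hsx.ne').const_mul _
    have h3 := (h1.sub h2).hasDerivWithinAt (s := Ioi 0)
    refine h3.congr_deriv ?_
    have hxx : Real.sqrt x ^ 2 = x := Real.sq_sqrt hx'.le
    rw [hxx]
    field_simp
    ring
  -- injectivity
  have hmono : StrictMonoOn φ (Ioi 0) := by
    intro x hx y hy hxy
    have hx' : (0:ℝ) < x := hx
    have hy' : (0:ℝ) < y := hy
    have hsx : (0:ℝ) < Real.sqrt x := Real.sqrt_pos.mpr hx'
    have hsy : (0:ℝ) < Real.sqrt y := Real.sqrt_pos.mpr hy'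
    have h1 : Real.sqrt x < Real.sqrt y := Real.sqrt_lt_sqrt hx'.le hxy
    have h2 : (Real.sqrt y)⁻¹ < (Real.sqrt x)⁻¹ := by
      exact inv_strictAnti₀ hsx h1
    have h3 : Real.sqrt p * Real.sqrt x < Real.sqrt p * Real.sqrt y :=
      mul_lt_mul_of_pos_left h1 hsp
    have h4 : Real.sqrt q * (Real.sqrt y)⁻¹ < Real.sqrt q * (Real.sqrt x)⁻¹ :=
      mul_lt_mul_of_pos_left h2 hsq
    simp only [hφ_def]
    linarith
  have hinj : InjOn φ (Ioi 0) := hmono.injOn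
  -- surjectivity onto ℝ
  have himg : φ '' Ioi 0 = univ := by
    apply eq_univ_of_forall
    intro y
    set a := Real.sqrt p
    set b := Real.sqrt q
    have hd0 : (0:ℝ) < y ^ 2 + 4 * a * b := by positivity
    set d := Real.sqrt (y ^ 2 + 4 * a * b) with hd_def
    have hd2 : d ^ 2 = y ^ 2 + 4 * a * b := Real.sq_sqrt hd0.le
    have hdy : -y < d := by
      rcases le_or_gt y 0 with h | h
      · have : |y| < d := by
          rw [← Real.sqrt_sq_eq_abs]
          exact Real.sqrt_lt_sqrt (sq_nonneg y) (by nlinarith)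
        calc -y ≤ |y| := neg_le_abs y
          _ < d := this
      · have : (0:ℝ) < d := Real.sqrt_pos.mpr hd0
        linarith
    set s := (y + d) / (2 * a) with hs_def
    have hs : (0:ℝ) < s := by
      apply div_pos (by linarith) (by positivity)
    have hs2 : 2 * a * s = y + d := by
      rw [hs_def]; field_simp
    have h5 : 4 * a * (a * s ^ 2 - y * s - b) = 0 := by
      rw [show 4 * a * (a * s ^ 2 - y * s - b)
          = (2 * a * s) ^ 2 - 2 * y * (2 * a * s) - 4 * a * b by ring, hs2]
      linear_combination hd2
    have key : a * s ^ 2 - y * s - b = 0 := by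
      have h4a : (4 : ℝ) * a ≠ 0 := by positivity
      exact (mul_eq_zero.mp h5).resolve_left h4a
    refine ⟨s ^ 2, mem_Ioi.mpr (by positivity), ?_⟩
    simp only [hφ_def]
    rw [Real.sqrt_sq hs.le]
    field_simp
    linear_combination key
  -- change of variables
  have key := integral_image_eq_integral_abs_deriv_smul measurableSet_Ioi hderiv hinj
    (fun v => Real.exp (-(v ^ 2 + 2 * Real.sqrt (p * q))))
  rw [himg, Measure.restrict_univ] at key
  -- LHS of key
  have hL : ∫ v : ℝ, Real.exp (-(v ^ 2 + 2 * Real.sqrt (p * q)))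
      = Real.sqrt π * Real.exp (-(2 * Real.sqrt (p * q))) := by
    have : ∀ v : ℝ, Real.exp (-(v ^ 2 + 2 * Real.sqrt (p * q)))
        = Real.exp (-(2 * Real.sqrt (p * q))) * Real.exp (-1 * v ^ 2) := by
      intro v; rw [← Real.exp_add]; ring_nf
    simp_rw [this]
    rw [integral_const_mul, integral_gaussian]
    rw [div_one]
    ring
  -- RHS of key: pointwise identity
  have hR : ∫ x in Ioi 0,
      |(Real.sqrt p * (Real.sqrt x)⁻¹ + Real.sqrt q * (x * Real.sqrt x)⁻¹) / 2| •
        Real.exp (-(φ x ^ 2 + 2 * Real.sqrt (p * q)))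
      = ∫ x in Ioi 0, (1 / 2) *
        ((Real.sqrt p * (Real.sqrt x)⁻¹ + Real.sqrt q * (x * Real.sqrt x)⁻¹) *
          Real.exp (-(p * x + q / x))) := by
    apply setIntegral_congr_fun measurableSet_Ioi
    intro t ht
    have ht' : (0:ℝ) < t := ht
    have hst : (0:ℝ) < Real.sqrt t := Real.sqrt_pos.mpr ht'
    have hts : Real.sqrt t ^ 2 = t := Real.sq_sqrt ht'.le
    have hps : Real.sqrt p ^ 2 = p := Real.sq_sqrt hp.le
    have hqs : Real.sqrt q ^ 2 = q := Real.sq_sqrt hq.le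
    have hpq : Real.sqrt (p * q) = Real.sqrt p * Real.sqrt q := Real.sqrt_mul hp.le q
    have e1 : (Real.sqrt p * Real.sqrt t) ^ 2 = p * t := by rw [mul_pow, hps, hts]
    have e2 : (Real.sqrt q * (Real.sqrt t)⁻¹) ^ 2 = q / t := by
      rw [mul_pow, inv_pow, hqs, hts, ← div_eq_mul_inv]
    have e3 : Real.sqrt p * Real.sqrt t * (Real.sqrt q * (Real.sqrt t)⁻¹)
        = Real.sqrt p * Real.sqrt q := by
      field_simp
    have harg : φ t ^ 2 + 2 * Real.sqrt (p * q) = p * t + q / t := by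
      simp only [hφ_def, hpq]
      linear_combination e1 + e2 - 2 * e3
    show |(Real.sqrt p * (Real.sqrt t)⁻¹ + Real.sqrt q * (t * Real.sqrt t)⁻¹) / 2| •
        Real.exp (-(φ t ^ 2 + 2 * Real.sqrt (p * q)))
      = 1 / 2 * ((Real.sqrt p * (Real.sqrt t)⁻¹ + Real.sqrt q * (t * Real.sqrt t)⁻¹) *
          Real.exp (-(p * t + q / t)))
    rw [smul_eq_mul, harg, abs_of_pos (by positivity)]
    ring
  rw [hL, hR, integral_const_mul] at key
  linarith
end


section
variable {p q : ℝ}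

lemma I3_eq (hp : 0 < p) (hq : 0 < q) :
    ∫ t in Ioi 0, (t * Real.sqrt t)⁻¹ * Real.exp (-(p * t + q / t))
      = Real.sqrt π / Real.sqrt q * Real.exp (-(2 * Real.sqrt (p * q))) := by
  have hsp : (0:ℝ) < Real.sqrt p := Real.sqrt_pos.mpr hp
  have hsq : (0:ℝ) < Real.sqrt q := Real.sqrt_pos.mpr hq
  set I1 := ∫ t in Ioi 0, (Real.sqrt t)⁻¹ * Real.exp (-(p * t + q / t)) with hI1
  set I3 := ∫ t in Ioi 0, (t * Real.sqrt t)⁻¹ * Real.exp (-(p * t + q / t)) with hI3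
  have hsplit : ∫ t in Ioi 0,
      (Real.sqrt p * (Real.sqrt t)⁻¹ + Real.sqrt q * (t * Real.sqrt t)⁻¹) *
        Real.exp (-(p * t + q / t))
      = Real.sqrt p * I1 + Real.sqrt q * I3 := by
    have heq : ∀ t : ℝ,
        (Real.sqrt p * (Real.sqrt t)⁻¹ + Real.sqrt q * (t * Real.sqrt t)⁻¹) *
          Real.exp (-(p * t + q / t))
        = Real.sqrt p * ((Real.sqrt t)⁻¹ * Real.exp (-(p * t + q / t)))
          + Real.sqrt q * ((t * Real.sqrt t)⁻¹ * Real.exp (-(p * t + q / t))) := by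
      intro t; ring
    simp_rw [heq]
    rw [integral_add ((integrable12 hp hq).const_mul _) ((integrable32 hp hq).const_mul _),
      integral_const_mul, integral_const_mul]
  have hsym : Real.sqrt q * I3 = Real.sqrt p * I1 := by
    rw [hI3, symm_sub hp hq, ← hI1]
    field_simp
  have hg := glasser hp hq
  rw [hsplit, ← hsym] at hg
  rw [hI3]
  rw [div_mul_eq_mul_div, eq_div_iff hsq.ne']
  linarith
end

lemma gamma_half_int {s : ℝ} (hs : 0 < s) :
    ∫ t in Ioi 0, (Real.sqrt t)⁻¹ * Real.exp (-(s*t)) = (Real.sqrt s)⁻¹ * Real.sqrt π := by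
  have h := Real.integral_rpow_mul_exp_neg_mul_Ioi (by norm_num : (0:ℝ) < 1/2) hs
  rw [Real.Gamma_one_half_eq] at h
  rw [show ∫ t in Ioi 0, (Real.sqrt t)⁻¹ * Real.exp (-(s*t))
      = ∫ t in Ioi 0, t ^ ((1:ℝ)/2 - 1) * Real.exp (-(s*t)) from ?_, h]
  · rw [Real.sqrt_eq_rpow π, Real.sqrt_eq_rpow s, one_div, Real.inv_rpow hs.le, one_div]
  · apply setIntegral_congr_fun measurableSet_Ioi
    intro t ht
    have ht' : (0:ℝ) < t := ht
    show (Real.sqrt t)⁻¹ * Real.exp (-(s*t)) = t ^ ((1:ℝ)/2 - 1) * Real.exp (-(s*t))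
    rw [show ((1:ℝ)/2 - 1) = -(1/2) by norm_num, Real.rpow_neg ht'.le, Real.sqrt_eq_rpow]


lemma stepA {a r : ℝ} (ha : 0 < a) (hr : 0 < r) :
    Real.exp (-a * r) / (2 * π * r)
      = (4 * π * Real.sqrt π)⁻¹ *
        ∫ t in Ioi 0, (t * Real.sqrt t)⁻¹ * Real.exp (-(a ^ 2 * t + r ^ 2 / (4 * t))) := by
  have hq : (0:ℝ) < r ^ 2 / 4 := by positivity
  have hπ : (0:ℝ) < π := Real.pi_pos
  have hsπ : (0:ℝ) < Real.sqrt π := Real.sqrt_pos.mpr hπ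
  have hcong : ∀ t : ℝ, a ^ 2 * t + r ^ 2 / (4 * t) = a ^ 2 * t + (r ^ 2 / 4) / t := by
    intro t; rw [div_div]
  simp_rw [hcong]
  rw [I3_eq (by positivity) hq]
  have h1 : Real.sqrt (r ^ 2 / 4) = r / 2 := by
    rw [show r ^ 2 / 4 = (r / 2) ^ 2 by ring, Real.sqrt_sq (by positivity)]
  have h2 : Real.sqrt (a ^ 2 * (r ^ 2 / 4)) = a * r / 2 := by
    rw [show a ^ 2 * (r ^ 2 / 4) = (a * r / 2) ^ 2 by ring, Real.sqrt_sq (by positivity)]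
  rw [h1, h2, show -(2 * (a * r / 2)) = -a * r by ring]
  field_simp
  ring


end FourierExpAux



lemma ofReal_integral_Ioi (f : ℝ → ℝ) :
    (∫ t in Ioi (0:ℝ), ((f t : ℝ) : ℂ)) = ((∫ t in Ioi (0:ℝ), f t : ℝ) : ℂ) :=
  integral_ofReal

/-- For `a > 0`, the 2D Fourier transform of `r ↦ e^{-a|r|}/(2π|r|)` is
`k ↦ 1/√(a² + |k|²)`. -/
theorem fourier_exp_div_norm (a : ℝ) (ha : 0 < a) (k : EuclideanSpace ℝ (Fin 2)) :
    ∫ r : EuclideanSpace ℝ (Fin 2),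
        Complex.exp (-Complex.I * ((inner ℝ k r : ℝ) : ℂ)) *
          ((Real.exp (-a * ‖r‖) / (2 * π * ‖r‖) : ℝ) : ℂ)
      = ((1 / Real.sqrt (a ^ 2 + ‖k‖ ^ 2) : ℝ) : ℂ) := by
  have hπ : (0:ℝ) < π := Real.pi_pos
  have hsπ : (0:ℝ) < Real.sqrt π := Real.sqrt_pos.mpr hπ
  set c : ℝ := (4 * π * Real.sqrt π)⁻¹ with hc
  have hcpos : 0 < c := by positivity
  set s : ℝ := a ^ 2 + ‖k‖ ^ 2 with hs_def
  have hs : 0 < s := by positivity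
  set F : ℝ × EuclideanSpace ℝ (Fin 2) → ℂ := fun p =>
    Complex.exp (-Complex.I * ((inner ℝ k p.2 : ℝ) : ℂ)) * (c : ℂ) *
      (((p.1 * Real.sqrt p.1)⁻¹ *
        Real.exp (-(a ^ 2 * p.1 + ‖p.2‖ ^ 2 / (4 * p.1))) : ℝ) : ℂ) with hF
  -- measurability of F on the product
  have hFmeas : AEStronglyMeasurable F ((volume.restrict (Ioi 0)).prod volume) := by
    apply Measurable.aestronglyMeasurable
    have m0 : Continuous fun p : ℝ × EuclideanSpace ℝ (Fin 2) => (inner ℝ k p.2 : ℝ) :=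
      continuous_const.inner continuous_snd
    have m1 : Measurable fun p : ℝ × EuclideanSpace ℝ (Fin 2) =>
        Complex.exp (-Complex.I * ((inner ℝ k p.2 : ℝ) : ℂ)) :=
      (Complex.continuous_exp.comp
        (continuous_const.mul (Complex.continuous_ofReal.comp m0))).measurable
    have m2 : Measurable fun p : ℝ × EuclideanSpace ℝ (Fin 2) =>
        (p.1 * Real.sqrt p.1)⁻¹ :=
      (measurable_fst.mul (Real.continuous_sqrt.measurable.comp measurable_fst)).inv
    have m3 : Measurable fun p : ℝ × EuclideanSpace ℝ (Fin 2) =>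
        Real.exp (-(a ^ 2 * p.1 + ‖p.2‖ ^ 2 / (4 * p.1))) := by
      apply Real.measurable_exp.comp
      apply Measurable.neg
      apply Measurable.add
      · exact measurable_const.mul measurable_fst
      · exact (measurable_snd.norm.pow measurable_const).div
          (measurable_const.mul measurable_fst)
    exact (m1.mul measurable_const).mul (Complex.measurable_ofReal.comp (m2.mul m3))
  -- pointwise Gaussian form of the slices
  have hFslice : ∀ t : ℝ, 0 < t → ∀ r : EuclideanSpace ℝ (Fin 2),
      F (t, r) = ((c * ((t * Real.sqrt t)⁻¹ * Real.exp (-(a ^ 2 * t))) : ℝ) : ℂ) *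
        Complex.exp (-(((1 / (4 * t) : ℝ)) : ℂ) * (‖r‖ : ℂ) ^ 2 +
          (-Complex.I) * ((inner ℝ k r : ℝ) : ℂ)) := by
    intro t ht r
    have hQ : ((-(a ^ 2 * t + ‖r‖ ^ 2 / (4 * t)) : ℝ) : ℂ)
        = ((-(a ^ 2 * t) : ℝ) : ℂ) + (-(((1 / (4 * t) : ℝ)) : ℂ) * (‖r‖ : ℂ) ^ 2) := by
      push_cast
      field_simp
      ring
    simp only [hF, Complex.ofReal_mul, Complex.ofReal_exp, hQ, Complex.exp_add]
    ring
  -- integrability of slices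
  have hslice : ∀ t : ℝ, 0 < t →
      Integrable (fun r : EuclideanSpace ℝ (Fin 2) => F (t, r)) := by
    intro t ht
    have hb : (0:ℝ) < ((((1 / (4 * t) : ℝ)) : ℂ)).re := by
      simp only [Complex.ofReal_re]
      positivity
    have hG := GaussianFourier.integrable_cexp_neg_mul_sq_norm_add
      (V := EuclideanSpace ℝ (Fin 2)) hb (-Complex.I) k
    have := hG.const_mul ((c * ((t * Real.sqrt t)⁻¹ * Real.exp (-(a ^ 2 * t))) : ℝ) : ℂ)
    apply this.congr
    filter_upwards with r
    rw [hFslice t ht r]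
  -- norm of F
  have hFnorm : ∀ t : ℝ, 0 < t → ∀ r : EuclideanSpace ℝ (Fin 2),
      ‖F (t, r)‖ = c * ((t * Real.sqrt t)⁻¹ *
        Real.exp (-(a ^ 2 * t + ‖r‖ ^ 2 / (4 * t)))) := by
    intro t ht r
    have h1 : (0:ℝ) < (t * Real.sqrt t)⁻¹ := by
      have := Real.sqrt_pos.mpr ht
      positivity
    simp only [hF, norm_mul, Complex.norm_exp, Complex.norm_real, Real.norm_eq_abs]
    rw [show (-Complex.I * ((inner ℝ k r : ℝ) : ℂ)).re = 0 by simp]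
    rw [Real.exp_zero, abs_of_pos h1, abs_of_pos (Real.exp_pos _),
      abs_of_pos hcpos]
    ring
  -- the function t ↦ ∫ r, ‖F (t, r)‖ is integrable on Ioi 0
  have hnormint : Integrable (fun t => ∫ r, ‖F (t, r)‖) (volume.restrict (Ioi 0)) := by
    have hg : IntegrableOn
        (fun t : ℝ => (4 * π * c) * ((Real.sqrt t)⁻¹ * Real.exp (-(a ^ 2 * t)))) (Ioi 0) := by
      have h0 := integrableOn_rpow_mul_exp_neg_mul_rpow
        (by norm_num : (-1:ℝ) < -(1/2)) (by norm_num : (0:ℝ) < 1) (by positivity : (0:ℝ) < a ^ 2)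
      apply ((h0.congr_fun ?_ measurableSet_Ioi).const_mul (4 * π * c))
      intro t ht
      have ht' : (0:ℝ) < t := ht
      show t ^ (-(1/2) : ℝ) * Real.exp (-a ^ 2 * t ^ (1:ℝ))
        = (Real.sqrt t)⁻¹ * Real.exp (-(a ^ 2 * t))
      rw [Real.rpow_one, Real.rpow_neg ht'.le, ← Real.sqrt_eq_rpow, neg_mul]
    apply hg.congr
    rw [Filter.eventuallyEq_iff_exists_mem]
    refine ⟨Ioi 0, self_mem_ae_restrict measurableSet_Ioi, fun t ht => ?_⟩
    have ht' : (0:ℝ) < t := ht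
    have hst : (0:ℝ) < Real.sqrt t := Real.sqrt_pos.mpr ht'
    have hgauss := GaussianFourier.integral_rexp_neg_mul_sq_norm
      (V := EuclideanSpace ℝ (Fin 2)) (by positivity : (0:ℝ) < 1 / (4 * t))
    rw [finrank_euclideanSpace_fin] at hgauss
    have hsplit : ∀ r : EuclideanSpace ℝ (Fin 2),
        Real.exp (-(a ^ 2 * t + ‖r‖ ^ 2 / (4 * t)))
          = Real.exp (-(a ^ 2 * t)) * Real.exp (-(1 / (4 * t)) * ‖r‖ ^ 2) := by
      intro r
      rw [← Real.exp_add]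
      congr 1
      field_simp
      ring
    calc (4 * π * c) * ((Real.sqrt t)⁻¹ * Real.exp (-(a ^ 2 * t)))
        = c * ((t * Real.sqrt t)⁻¹ * Real.exp (-(a ^ 2 * t)))
            * ((π / (1 / (4 * t))) ^ ((2:ℕ) / 2 : ℝ)) := by
          rw [show ((2:ℕ) / 2 : ℝ) = 1 by norm_num, Real.rpow_one]
          have : (t * Real.sqrt t)⁻¹ * t = (Real.sqrt t)⁻¹ := by
            field_simp
          field_simp
      _ = c * ((t * Real.sqrt t)⁻¹ * Real.exp (-(a ^ 2 * t)))
            * ∫ r : EuclideanSpace ℝ (Fin 2), Real.exp (-(1 / (4 * t)) * ‖r‖ ^ 2) := by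
          rw [hgauss]
      _ = ∫ r : EuclideanSpace ℝ (Fin 2),
            c * ((t * Real.sqrt t)⁻¹ * Real.exp (-(a ^ 2 * t + ‖r‖ ^ 2 / (4 * t)))) := by
          rw [← integral_const_mul]
          congr 1
          funext r
          rw [hsplit r]
          ring
      _ = ∫ r, ‖F (t, r)‖ := by
          congr 1
          funext r
          rw [hFnorm t ht' r]
  -- full integrability on the product
  have hFint : Integrable F ((volume.restrict (Ioi 0)).prod volume) := by
    rw [MeasureTheory.integrable_prod_iff hFmeas]
    constructor
    · filter_upwards [self_mem_ae_restrict (measurableSet_Ioi (a := (0:ℝ)))] with t ht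
      exact hslice t ht
    · exact hnormint
  -- Step B : rewrite the integrand of the LHS
  have hae : ∀ᵐ r : EuclideanSpace ℝ (Fin 2),
      Complex.exp (-Complex.I * ((inner ℝ k r : ℝ) : ℂ)) *
          ((Real.exp (-a * ‖r‖) / (2 * π * ‖r‖) : ℝ) : ℂ)
        = ∫ t in Ioi 0, F (t, r) := by
    have h0 : ∀ᵐ r : EuclideanSpace ℝ (Fin 2), r ≠ 0 := by
      rw [MeasureTheory.ae_iff, show {r : EuclideanSpace ℝ (Fin 2) | ¬ r ≠ 0}
        = {(0 : EuclideanSpace ℝ (Fin 2))} by ext x; simp]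
      exact measure_singleton 0
    filter_upwards [h0] with r hr
    have hr' : (0:ℝ) < ‖r‖ := norm_pos_iff.mpr hr
    rw [stepA ha hr']
    have : ∫ t in Ioi 0, F (t, r)
        = (Complex.exp (-Complex.I * ((inner ℝ k r : ℝ) : ℂ)) * (c : ℂ)) *
          ∫ t in Ioi 0, (((t * Real.sqrt t)⁻¹ *
            Real.exp (-(a ^ 2 * t + ‖r‖ ^ 2 / (4 * t))) : ℝ) : ℂ) := by
      rw [← integral_const_mul]
    rw [this, ofReal_integral_Ioi
      (fun t => (t * Real.sqrt t)⁻¹ * Real.exp (-(a ^ 2 * t + ‖r‖ ^ 2 / (4 * t)))),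
      Complex.ofReal_mul, ← hc]
    ring
  rw [integral_congr_ae hae, ← integral_integral_swap hFint]
  -- evaluate the inner Gaussian integral
  have hinner : ∀ t : ℝ, 0 < t →
      (∫ r : EuclideanSpace ℝ (Fin 2), F (t, r))
        = ((((Real.sqrt π)⁻¹ * ((Real.sqrt t)⁻¹ * Real.exp (-(s * t))) : ℝ)) : ℂ) := by
    intro t ht
    have hst : (0:ℝ) < Real.sqrt t := Real.sqrt_pos.mpr ht
    have htC : (t : ℂ) ≠ 0 := Complex.ofReal_ne_zero.mpr ht.ne'
    have hb : (0:ℝ) < ((((1 / (4 * t) : ℝ)) : ℂ)).re := by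
      simp only [Complex.ofReal_re]; positivity
    have hval := GaussianFourier.integral_cexp_neg_mul_sq_norm_add
      (V := EuclideanSpace ℝ (Fin 2)) hb (-Complex.I) k
    have hrw : ∫ r : EuclideanSpace ℝ (Fin 2), F (t, r)
        = ((c * ((t * Real.sqrt t)⁻¹ * Real.exp (-(a ^ 2 * t))) : ℝ) : ℂ) *
          ∫ r : EuclideanSpace ℝ (Fin 2),
            Complex.exp (-(((1 / (4 * t) : ℝ)) : ℂ) * (‖r‖ : ℂ) ^ 2 +
              (-Complex.I) * ((inner ℝ k r : ℝ) : ℂ)) := by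
      rw [← integral_const_mul]
      congr 1
      funext r
      exact hFslice t ht r
    rw [hrw, hval, finrank_euclideanSpace_fin]
    have hexp1 : (((2:ℕ) : ℂ) / 2) = 1 := by norm_num
    rw [hexp1, Complex.cpow_one]
    have hdiv : ((π : ℝ) : ℂ) / (((1 / (4 * t) : ℝ)) : ℂ) = (((4 * π * t : ℝ)) : ℂ) := by
      push_cast
      field_simp
    have harg : (-Complex.I) ^ 2 * ((‖k‖ : ℝ) : ℂ) ^ 2 / (4 * (((1 / (4 * t) : ℝ)) : ℂ))
        = ((-(‖k‖ ^ 2 * t) : ℝ) : ℂ) := by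
      rw [neg_sq, Complex.I_sq]
      push_cast
      field_simp
    rw [hdiv, harg, ← Complex.ofReal_exp, ← Complex.ofReal_mul, ← Complex.ofReal_mul]
    congr 1
    have h2 : Real.exp (-(a ^ 2 * t)) * Real.exp (-(‖k‖ ^ 2 * t)) = Real.exp (-(s * t)) := by
      rw [← Real.exp_add, hs_def]
      ring_nf
    rw [← h2, hc]
    field_simp
  rw [setIntegral_congr_ae measurableSet_Ioi
    (Filter.Eventually.of_forall fun t ht => hinner t ht)]
  rw [ofReal_integral_Ioi (fun t => (Real.sqrt π)⁻¹ * ((Real.sqrt t)⁻¹ * Real.exp (-(s * t))))]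
  rw [Complex.ofReal_inj]
  rw [integral_const_mul, gamma_half_int hs, one_div]
  field_simp
end

section
/- The Poisson kernel P(x,y) = 2 cosh(πx) sin(πy) / (cosh(2πx) − cos(2πy)) for the half-strip ℝ × (0, 1/2) satisfies: P(x,y) > 0 for all x ∈ ℝ and y ∈ (0, 1/2), ∫_ℝ P(x,y) dx = 1 for every y ∈ (0, 1/2), and P is harmonic in (x,y) on ℝ × (0, 1/2). -/
open Real Filter Set MeasureTheory Topology

noncomputable def Qk (x y : ℝ) : ℝ :=
  Real.cosh (π*x) * Real.sin (π*y) / (Real.sinh (π*x)^2 + Real.sin (π*y)^2)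

lemma Qk_denom_pos {x y : ℝ} (hs : Real.sin (π*y) ≠ 0) :
    0 < Real.sinh (π*x)^2 + Real.sin (π*y)^2 := by positivity

lemma P_eq_Qk (x y : ℝ) :
    2 * Real.cosh (π * x) * Real.sin (π * y) /
        (Real.cosh (2 * π * x) - Real.cos (2 * π * y)) = Qk x y := by
  have h1 : Real.cosh (2*π*x) = 2 * Real.cosh (π*x)^2 - 1 := by
    rw [show (2:ℝ)*π*x = 2*(π*x) by ring, Real.cosh_two_mul]
    linear_combination -Real.cosh_sq (π*x)
  have h2 : Real.cos (2*π*y) = 1 - 2 * Real.sin (π*y)^2 := by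
    rw [show (2:ℝ)*π*y = 2*(π*y) by ring, Real.cos_two_mul, Real.cos_sq']
    ring
  have h3 : Real.cosh (π*x)^2 = Real.sinh (π*x)^2 + 1 := Real.cosh_sq _
  rw [h1, h2]
  rw [show 2 * Real.cosh (π*x)^2 - 1 - (1 - 2*Real.sin (π*y)^2)
      = 2 * (Real.sinh (π*x)^2 + Real.sin (π*y)^2) by rw [h3]; ring]
  rw [show 2 * Real.cosh (π*x) * Real.sin (π*y) = 2 * (Real.cosh (π*x) * Real.sin (π*y)) by ring]
  exact mul_div_mul_left _ _ two_ne_zero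

lemma hasDerivAt_Qkx (y : ℝ) (hs : Real.sin (π*y) ≠ 0) (x : ℝ) :
    HasDerivAt (fun t => Qk t y)
      (π * Real.sin (π*y) * Real.sinh (π*x) *
          (Real.sin (π*y)^2 - Real.sinh (π*x)^2 - 2) /
        (Real.sinh (π*x)^2 + Real.sin (π*y)^2)^2) x := by
  have hd := (Qk_denom_pos (x := x) hs).ne'
  have hpt : HasDerivAt (fun t : ℝ => π * t) π x := by
    simpa using (hasDerivAt_id x).const_mul π
  have hC : HasDerivAt (fun t => Real.cosh (π*t)) (Real.sinh (π*x) * π) x := hpt.cosh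
  have hS : HasDerivAt (fun t => Real.sinh (π*t)) (Real.cosh (π*x) * π) x := hpt.sinh
  have hnum : HasDerivAt (fun t => Real.cosh (π*t) * Real.sin (π*y))
      (Real.sinh (π*x) * π * Real.sin (π*y)) x := hC.mul_const _
  have hden : HasDerivAt (fun t => Real.sinh (π*t)^2 + Real.sin (π*y)^2)
      (2 * Real.sinh (π*x) * (Real.cosh (π*x) * π)) x := by
    have := (hS.pow 2).add_const (Real.sin (π*y)^2)
    simpa [mul_comm, mul_assoc, mul_left_comm] using this
  have h := hnum.div hden hd
  refine h.congr_deriv (Eq.symm ?_)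
  have h3 : Real.cosh (π*x)^2 = Real.sinh (π*x)^2 + 1 := Real.cosh_sq _
  field_simp
  linear_combination (2*Real.sinh (π*x)) * h3

lemma hasDerivAt_Qkxx (y : ℝ) (hs : Real.sin (π*y) ≠ 0) (x : ℝ) :
    HasDerivAt (fun t => π * Real.sin (π*y) * Real.sinh (π*t) *
          (Real.sin (π*y)^2 - Real.sinh (π*t)^2 - 2) /
        (Real.sinh (π*t)^2 + Real.sin (π*y)^2)^2)
      (π^2 * Real.sin (π*y) * Real.cosh (π*x) *
          ((Real.sin (π*y)^2 - 3*Real.sinh (π*x)^2 - 2) *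
              (Real.sinh (π*x)^2 + Real.sin (π*y)^2)
            - 4*Real.sinh (π*x)^2*(Real.sin (π*y)^2 - Real.sinh (π*x)^2 - 2)) /
        (Real.sinh (π*x)^2 + Real.sin (π*y)^2)^3) x := by
  have hd := (Qk_denom_pos (x := x) hs).ne'
  have hpt : HasDerivAt (fun t : ℝ => π * t) π x := by
    simpa using (hasDerivAt_id x).const_mul π
  have hS : HasDerivAt (fun t => Real.sinh (π*t)) (Real.cosh (π*x) * π) x := hpt.sinh
  have h1 : HasDerivAt (fun t => π * Real.sin (π*y) * Real.sinh (π*t))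
      (π * Real.sin (π*y) * (Real.cosh (π*x) * π)) x := hS.const_mul _
  have hin : HasDerivAt (fun t => Real.sin (π*y)^2 - Real.sinh (π*t)^2 - 2)
      (-(2 * Real.sinh (π*x) * (Real.cosh (π*x) * π))) x := by
    have := ((hS.pow 2).const_sub (Real.sin (π*y)^2)).sub_const 2
    simpa [mul_comm, mul_assoc, mul_left_comm] using this
  have hu := h1.mul hin
  have hden : HasDerivAt (fun t => Real.sinh (π*t)^2 + Real.sin (π*y)^2)
      (2 * Real.sinh (π*x) * (Real.cosh (π*x) * π)) x := by
    have := (hS.pow 2).add_const (Real.sin (π*y)^2)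
    simpa [mul_comm, mul_assoc, mul_left_comm] using this
  have hv : HasDerivAt (fun t => (Real.sinh (π*t)^2 + Real.sin (π*y)^2)^2)
      (2 * (Real.sinh (π*x)^2 + Real.sin (π*y)^2) *
        (2 * Real.sinh (π*x) * (Real.cosh (π*x) * π))) x := by
    have := hden.pow 2
    exact this.congr_deriv (by norm_num)
  have h := hu.div hv (pow_ne_zero 2 hd)
  refine h.congr_deriv (Eq.symm ?_)
  simp only [Pi.mul_apply]
  field_simp
  ring

lemma hasDerivAt_Qky (x : ℝ) (y : ℝ) (hs : Real.sin (π*y) ≠ 0) :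
    HasDerivAt (fun u => Qk x u)
      (π * Real.cos (π*y) * Real.cosh (π*x) *
          (Real.sinh (π*x)^2 - Real.sin (π*y)^2) /
        (Real.sinh (π*x)^2 + Real.sin (π*y)^2)^2) y := by
  have hd := (Qk_denom_pos (x := x) hs).ne'
  have hpt : HasDerivAt (fun t : ℝ => π * t) π y := by
    simpa using (hasDerivAt_id y).const_mul π
  have hsin : HasDerivAt (fun u => Real.sin (π*u)) (Real.cos (π*y) * π) y := hpt.sin
  have hnum : HasDerivAt (fun u => Real.cosh (π*x) * Real.sin (π*u))
      (Real.cosh (π*x) * (Real.cos (π*y) * π)) y := hsin.const_mul _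
  have hden : HasDerivAt (fun u => Real.sinh (π*x)^2 + Real.sin (π*u)^2)
      (2 * Real.sin (π*y) * (Real.cos (π*y) * π)) y := by
    have := (hsin.pow 2).const_add (Real.sinh (π*x)^2)
    simpa [mul_comm, mul_assoc, mul_left_comm] using this
  have h := hnum.div hden hd
  refine h.congr_deriv (Eq.symm ?_)
  field_simp
  ring

lemma hasDerivAt_Qkyy (x : ℝ) (y : ℝ) (hs : Real.sin (π*y) ≠ 0) :
    HasDerivAt (fun u => π * Real.cos (π*u) * Real.cosh (π*x) *
          (Real.sinh (π*x)^2 - Real.sin (π*u)^2) /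
        (Real.sinh (π*x)^2 + Real.sin (π*u)^2)^2)
      (π^2 * Real.sin (π*y) * Real.cosh (π*x) *
          (-(Real.sinh (π*x)^2 - Real.sin (π*y)^2 + 2*(1 - Real.sin (π*y)^2)) *
              (Real.sinh (π*x)^2 + Real.sin (π*y)^2)
            - 4*(1 - Real.sin (π*y)^2)*(Real.sinh (π*x)^2 - Real.sin (π*y)^2)) /
        (Real.sinh (π*x)^2 + Real.sin (π*y)^2)^3) y := by
  have hd := (Qk_denom_pos (x := x) hs).ne'
  have hpt : HasDerivAt (fun t : ℝ => π * t) π y := by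
    simpa using (hasDerivAt_id y).const_mul π
  have hsin : HasDerivAt (fun u => Real.sin (π*u)) (Real.cos (π*y) * π) y := hpt.sin
  have hcos : HasDerivAt (fun u => Real.cos (π*u)) (-Real.sin (π*y) * π) y := by
    simpa using hpt.cos
  have ha : HasDerivAt (fun u => π * Real.cos (π*u) * Real.cosh (π*x))
      (π * (-Real.sin (π*y) * π) * Real.cosh (π*x)) y := by
    simpa [mul_assoc] using (hcos.const_mul π).mul_const (Real.cosh (π*x))
  have hb : HasDerivAt (fun u => Real.sinh (π*x)^2 - Real.sin (π*u)^2)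
      (-(2 * Real.sin (π*y) * (Real.cos (π*y) * π))) y := by
    have := (hsin.pow 2).const_sub (Real.sinh (π*x)^2)
    simpa [mul_comm, mul_assoc, mul_left_comm] using this
  have hu := ha.mul hb
  have hden : HasDerivAt (fun u => Real.sinh (π*x)^2 + Real.sin (π*u)^2)
      (2 * Real.sin (π*y) * (Real.cos (π*y) * π)) y := by
    have := (hsin.pow 2).const_add (Real.sinh (π*x)^2)
    simpa [mul_comm, mul_assoc, mul_left_comm] using this
  have hv : HasDerivAt (fun u => (Real.sinh (π*x)^2 + Real.sin (π*u)^2)^2)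
      (2 * (Real.sinh (π*x)^2 + Real.sin (π*y)^2) *
        (2 * Real.sin (π*y) * (Real.cos (π*y) * π))) y := by
    have := hden.pow 2
    exact this.congr_deriv (by norm_num)
  have h := hu.div hv (pow_ne_zero 2 hd)
  refine h.congr_deriv (Eq.symm ?_)
  simp only [Pi.mul_apply]
  have hsc : Real.sin (π*y)^2 + Real.cos (π*y)^2 = 1 := Real.sin_sq_add_cos_sq _
  rw [div_eq_div_iff (pow_ne_zero 3 hd) (pow_ne_zero 2 (pow_ne_zero 2 hd))]
  linear_combination (π^2 * Real.sin (π*y) * Real.cosh (π*x) *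
      (2*(Real.sinh (π*x)^2+Real.sin (π*y)^2) + 4*(Real.sinh (π*x)^2 - Real.sin (π*y)^2)) *
      (Real.sinh (π*x)^2+Real.sin (π*y)^2)^4) * hsc

lemma hasDerivAt_F (y : ℝ) (hs : Real.sin (π*y) ≠ 0) (x : ℝ) :
    HasDerivAt (fun t => (1/π) * Real.arctan (Real.sinh (π*t) / Real.sin (π*y)))
      (Qk x y) x := by
  have hd := (Qk_denom_pos (x := x) hs).ne'
  have hpt : HasDerivAt (fun t : ℝ => π * t) π x := by
    simpa using (hasDerivAt_id x).const_mul π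
  have hS : HasDerivAt (fun t => Real.sinh (π*t)) (Real.cosh (π*x) * π) x := hpt.sinh
  have h1 : HasDerivAt (fun t => Real.sinh (π*t) / Real.sin (π*y))
      (Real.cosh (π*x) * π / Real.sin (π*y)) x := hS.div_const _
  have h2 := (h1.arctan).const_mul (1/π)
  refine h2.congr_deriv (Eq.symm ?_)
  unfold Qk
  have hπ := Real.pi_ne_zero
  field_simp
  ring

lemma F_tendsto_top (y : ℝ) (hs : 0 < Real.sin (π*y)) :
    Tendsto (fun t => (1/π) * Real.arctan (Real.sinh (π*t) / Real.sin (π*y)))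
      atTop (𝓝 (1/2)) := by
  have h1 : Tendsto (fun t : ℝ => Real.sinh (π*t) / Real.sin (π*y)) atTop atTop := by
    apply Tendsto.atTop_div_const hs
    have hsinh : Tendsto Real.sinh atTop atTop := by
      apply tendsto_atTop_mono' atTop _ tendsto_id
      filter_upwards [eventually_gt_atTop (0:ℝ)] with t ht
      exact (Real.self_le_sinh_iff.mpr ht.le)
    exact hsinh.comp (tendsto_id.const_mul_atTop Real.pi_pos)
  have h2 : Tendsto (fun t : ℝ => Real.arctan (Real.sinh (π*t) / Real.sin (π*y)))
      atTop (𝓝 (π/2)) :=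
    (Real.tendsto_arctan_atTop.mono_right nhdsWithin_le_nhds).comp h1
  have h3 := h2.const_mul (1/π)
  have : (1/π) * (π/2) = 1/2 := by
    field_simp
  rwa [this] at h3

lemma integral_Qk (y : ℝ) (hs : 0 < Real.sin (π*y)) :
    ∫ x in Ioi (0:ℝ), Qk x y = 1/2 := by
  have h := MeasureTheory.integral_Ioi_of_hasDerivAt_of_nonneg
    (g := fun t => (1/π) * Real.arctan (Real.sinh (π*t) / Real.sin (π*y)))
    (g' := fun t => Qk t y) (a := 0)
    (hasDerivAt_F y hs.ne' 0).continuousAt.continuousWithinAt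
    (fun t _ => hasDerivAt_F y hs.ne' t)
    (fun t _ => by
      unfold Qk
      positivity)
    (F_tendsto_top y hs)
  rw [h]
  simp [Real.sinh_zero, Real.arctan_zero]


/-- The Poisson kernel `P(x,y) = 2 cosh(πx) sin(πy)/(cosh(2πx) − cos(2πy))` of the
half-strip `ℝ × (0, 1/2)` is positive, has unit mass `∫_ℝ P(x,y) dx = 1` for each
`y ∈ (0, 1/2)`, and is harmonic. -/
theorem poisson_kernel_strip_properties :
    let P : ℝ → ℝ → ℝ := fun x y =>
      2 * Real.cosh (π * x) * Real.sin (π * y) /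
        (Real.cosh (2 * π * x) - Real.cos (2 * π * y))
    (∀ x : ℝ, ∀ y ∈ Ioo (0:ℝ) (1 / 2), 0 < P x y) ∧
    (∀ y ∈ Ioo (0:ℝ) (1 / 2), (∫ x : ℝ, P x y) = 1) ∧
    (∀ x : ℝ, ∀ y ∈ Ioo (0:ℝ) (1 / 2),
      deriv (fun x' => deriv (fun x'' => P x'' y) x') x
        + deriv (fun y' => deriv (fun y'' => P x y'') y') y = 0) := by
  intro P
  have hsin : ∀ y ∈ Ioo (0:ℝ) (1/2), 0 < Real.sin (π * y) := by
    intro y hy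
    apply Real.sin_pos_of_pos_of_lt_pi (mul_pos Real.pi_pos hy.1)
    calc π * y < π * 1 := by
          exact mul_lt_mul_of_pos_left (by linarith [hy.2]) Real.pi_pos
      _ = π := mul_one π
  refine ⟨fun x y hy => ?_, fun y hy => ?_, fun x y hy => ?_⟩
  · have hsy := hsin y hy
    show 0 < 2 * Real.cosh (π * x) * Real.sin (π * y) /
        (Real.cosh (2 * π * x) - Real.cos (2 * π * y))
    rw [P_eq_Qk x y]
    exact div_pos (mul_pos (Real.cosh_pos _) hsy) (Qk_denom_pos hsy.ne')
  · have hsy := hsin y hy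
    show (∫ x : ℝ, 2 * Real.cosh (π * x) * Real.sin (π * y) /
        (Real.cosh (2 * π * x) - Real.cos (2 * π * y))) = 1
    have heq : (fun x : ℝ => 2 * Real.cosh (π * x) * Real.sin (π * y) /
        (Real.cosh (2 * π * x) - Real.cos (2 * π * y))) = fun x : ℝ => Qk |x| y := by
      funext x
      rw [P_eq_Qk x y]
      rcases abs_cases x with ⟨h, _⟩ | ⟨h, _⟩
      · rw [h]
      · rw [h]
        unfold Qk
        rw [show π * -x = -(π * x) by ring, Real.cosh_neg, Real.sinh_neg, neg_sq]
    rw [heq, integral_comp_abs (f := fun t => Qk t y), integral_Qk y hsy]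
    norm_num
  · have hsy := hsin y hy
    have hd := (Qk_denom_pos (x := x) hsy.ne').ne'
    show deriv (fun x' => deriv (fun x'' => 2 * Real.cosh (π * x'') * Real.sin (π * y) /
          (Real.cosh (2 * π * x'') - Real.cos (2 * π * y))) x') x
        + deriv (fun y' => deriv (fun y'' => 2 * Real.cosh (π * x) * Real.sin (π * y'') /
          (Real.cosh (2 * π * x) - Real.cos (2 * π * y''))) y') y = 0
    simp only [P_eq_Qk]
    have dQx : ∀ t : ℝ, deriv (fun u => Qk u y) t =
        π * Real.sin (π*y) * Real.sinh (π*t) *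
            (Real.sin (π*y)^2 - Real.sinh (π*t)^2 - 2) /
          (Real.sinh (π*t)^2 + Real.sin (π*y)^2)^2 :=
      fun t => (hasDerivAt_Qkx y hsy.ne' t).deriv
    simp only [dQx]
    rw [(hasDerivAt_Qkxx y hsy.ne' x).deriv]
    have hyev : (fun y' => deriv (fun y'' => Qk x y'') y') =ᶠ[𝓝 y]
        (fun y' => π * Real.cos (π*y') * Real.cosh (π*x) *
            (Real.sinh (π*x)^2 - Real.sin (π*y')^2) /
          (Real.sinh (π*x)^2 + Real.sin (π*y')^2)^2) := by
      have hcont : ContinuousAt (fun u : ℝ => Real.sin (π*u)) y := by fun_prop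
      filter_upwards [hcont.eventually_ne hsy.ne'] with u hu
      exact (hasDerivAt_Qky x u hu).deriv
    rw [hyev.deriv_eq, (hasDerivAt_Qkyy x y hsy.ne').deriv]
    field_simp
    ring
end

section
/- The function θ₀(x,y) = π/2 − arctan(sinh(πx)/sin(πy)) is harmonic in the strip Σ = ℝ × (0,1), satisfies θ₀(x,y) → 0 as x → +∞ and θ₀(x,y) → π as x → −∞ for every fixed y ∈ (0,1), and satisfies the symmetry θ₀(x,y) = π − θ₀(−x,y). -/
open Real Filter Set


lemma sinh_tendsto_atTop : Tendsto Real.sinh atTop atTop := by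
  have h : Tendsto (fun x : ℝ => (Real.exp x + -Real.exp (-x)) / 2) atTop atTop := by
    apply Tendsto.atTop_div_const (by norm_num : (0:ℝ) < 2)
    exact Real.tendsto_exp_atTop.atTop_add
      ((Real.tendsto_exp_atBot.comp tendsto_neg_atTop_atBot).neg)
  refine h.congr fun x => ?_
  rw [Real.sinh_eq]; ring

lemma sinh_tendsto_atBot : Tendsto Real.sinh atBot atBot := by
  have h := tendsto_neg_atTop_atBot.comp (sinh_tendsto_atTop.comp tendsto_neg_atBot_atTop)
  refine h.congr fun x => ?_
  simp [Real.sinh_neg]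

-- first x-derivative
lemma hdx (s : ℝ) (hs : 0 < s) (x : ℝ) :
    HasDerivAt (fun x' : ℝ => π / 2 - Real.arctan (Real.sinh (π * x') / s))
      (-(π * s * Real.cosh (π * x)) / (s ^ 2 + Real.sinh (π * x) ^ 2)) x := by
  have h1 : HasDerivAt (fun x' : ℝ => π * x') π x := by
    simpa using (hasDerivAt_id x).const_mul π
  have h2 : HasDerivAt (fun x' : ℝ => Real.sinh (π * x')) (Real.cosh (π * x) * π) x :=
    (Real.hasDerivAt_sinh (π * x)).comp x h1
  have h3 : HasDerivAt (fun x' : ℝ => Real.sinh (π * x') / s)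
      (Real.cosh (π * x) * π / s) x := h2.div_const s
  have h4 := (Real.hasDerivAt_arctan (Real.sinh (π * x) / s)).comp x h3
  have h5 := (hasDerivAt_const x (π / 2)).sub h4
  refine h5.congr_deriv ?_
  have hD : (0:ℝ) < s ^ 2 + Real.sinh (π * x) ^ 2 := by positivity
  have h1s : (0:ℝ) < 1 + (Real.sinh (π * x) / s) ^ 2 := by positivity
  field_simp
  ring

-- second x-derivative
lemma hdx2 (s : ℝ) (hs : 0 < s) (x : ℝ) :
    HasDerivAt (fun x' : ℝ => -(π * s * Real.cosh (π * x')) / (s ^ 2 + Real.sinh (π * x') ^ 2))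
      ((-(π * s * (Real.sinh (π * x) * π)) * (s ^ 2 + Real.sinh (π * x) ^ 2)
        - -(π * s * Real.cosh (π * x)) * (2 * Real.sinh (π * x) * (Real.cosh (π * x) * π)))
        / (s ^ 2 + Real.sinh (π * x) ^ 2) ^ 2) x := by
  have h1 : HasDerivAt (fun x' : ℝ => π * x') π x := by
    simpa using (hasDerivAt_id x).const_mul π
  have h2 : HasDerivAt (fun x' : ℝ => Real.sinh (π * x')) (Real.cosh (π * x) * π) x :=
    (Real.hasDerivAt_sinh (π * x)).comp x h1
  have h2c : HasDerivAt (fun x' : ℝ => Real.cosh (π * x')) (Real.sinh (π * x) * π) x :=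
    (Real.hasDerivAt_cosh (π * x)).comp x h1
  have hN : HasDerivAt (fun x' : ℝ => -(π * s * Real.cosh (π * x')))
      (-(π * s * (Real.sinh (π * x) * π))) x := by
    exact ((h2c.const_mul (π * s)).neg).congr_deriv (by ring)
  have hM : HasDerivAt (fun x' : ℝ => s ^ 2 + Real.sinh (π * x') ^ 2)
      (2 * Real.sinh (π * x) * (Real.cosh (π * x) * π)) x := by
    have := (h2.pow 2)
    have h' := (hasDerivAt_const x (s ^ 2)).add this
    exact h'.congr_deriv (by ring)
  have hD : (s ^ 2 + Real.sinh (π * x) ^ 2) ≠ 0 := by positivity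
  exact hN.div hM hD

-- first y-derivative (h = sinh(πx) constant)
lemma hdy (h : ℝ) (y : ℝ) (hy : y ∈ Ioo (0:ℝ) 1) :
    HasDerivAt (fun y' : ℝ => π / 2 - Real.arctan (h / Real.sin (π * y')))
      (π * h * Real.cos (π * y) / (Real.sin (π * y) ^ 2 + h ^ 2)) y := by
  have hs : 0 < Real.sin (π * y) := by
    apply Real.sin_pos_of_pos_of_lt_pi
    · exact mul_pos Real.pi_pos hy.1
    · nlinarith [Real.pi_pos, hy.2]
  have h1 : HasDerivAt (fun y' : ℝ => π * y') π y := by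
    simpa using (hasDerivAt_id y).const_mul π
  have h2 : HasDerivAt (fun y' : ℝ => Real.sin (π * y')) (Real.cos (π * y) * π) y :=
    (Real.hasDerivAt_sin (π * y)).comp y h1
  have h3 : HasDerivAt (fun y' : ℝ => h / Real.sin (π * y'))
      ((0 * Real.sin (π * y) - h * (Real.cos (π * y) * π)) / Real.sin (π * y) ^ 2) y :=
    (hasDerivAt_const y h).div h2 hs.ne'
  have h4 := (Real.hasDerivAt_arctan (h / Real.sin (π * y))).comp y h3
  have h5 := (hasDerivAt_const y (π / 2)).sub h4
  refine h5.congr_deriv ?_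
  have hD : (0:ℝ) < Real.sin (π * y) ^ 2 + h ^ 2 := by positivity
  have h1s : (0:ℝ) < 1 + (h / Real.sin (π * y)) ^ 2 := by positivity
  field_simp
  ring

-- second y-derivative
lemma hdy2 (h : ℝ) (y : ℝ) (hy : y ∈ Ioo (0:ℝ) 1) :
    HasDerivAt (fun y' : ℝ => π * h * Real.cos (π * y') / (Real.sin (π * y') ^ 2 + h ^ 2))
      ((π * h * (-Real.sin (π * y) * π) * (Real.sin (π * y) ^ 2 + h ^ 2)
        - π * h * Real.cos (π * y) * (2 * Real.sin (π * y) * (Real.cos (π * y) * π)))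
        / (Real.sin (π * y) ^ 2 + h ^ 2) ^ 2) y := by
  have hs : 0 < Real.sin (π * y) := by
    apply Real.sin_pos_of_pos_of_lt_pi
    · exact mul_pos Real.pi_pos hy.1
    · nlinarith [Real.pi_pos, hy.2]
  have h1 : HasDerivAt (fun y' : ℝ => π * y') π y := by
    simpa using (hasDerivAt_id y).const_mul π
  have h2 : HasDerivAt (fun y' : ℝ => Real.sin (π * y')) (Real.cos (π * y) * π) y :=
    (Real.hasDerivAt_sin (π * y)).comp y h1
  have h2c : HasDerivAt (fun y' : ℝ => Real.cos (π * y')) (-Real.sin (π * y) * π) y :=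
    (Real.hasDerivAt_cos (π * y)).comp y h1
  have hN : HasDerivAt (fun y' : ℝ => π * h * Real.cos (π * y'))
      (π * h * (-Real.sin (π * y) * π)) y := by
    simpa [mul_assoc] using (h2c.const_mul (π * h))
  have hM : HasDerivAt (fun y' : ℝ => Real.sin (π * y') ^ 2 + h ^ 2)
      (2 * Real.sin (π * y) * (Real.cos (π * y) * π)) y := by
    have := (h2.pow 2)
    have h' := this.add (hasDerivAt_const y (h ^ 2))
    exact h'.congr_deriv (by ring)
  have hD : (Real.sin (π * y) ^ 2 + h ^ 2) ≠ 0 := by positivity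
  exact hN.div hM hD

/-- The function `θ₀(x,y) = π/2 − arctan(sinh(πx)/sin(πy))` is harmonic in
`Σ = ℝ × (0,1)`, tends to `0` as `x → +∞` and to `π` as `x → −∞` for each fixed
`y ∈ (0,1)`, and satisfies `θ₀(x,y) = π − θ₀(−x,y)`. -/
theorem theta0_properties :
    let θ₀ : ℝ → ℝ → ℝ := fun x y =>
      π / 2 - Real.arctan (Real.sinh (π * x) / Real.sin (π * y))
    (∀ x : ℝ, ∀ y ∈ Ioo (0:ℝ) 1,
      deriv (fun x' => deriv (fun x'' => θ₀ x'' y) x') x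
        + deriv (fun y' => deriv (fun y'' => θ₀ x y'') y') y = 0) ∧
    (∀ y ∈ Ioo (0:ℝ) 1,
      Tendsto (fun x => θ₀ x y) atTop (nhds 0) ∧
      Tendsto (fun x => θ₀ x y) atBot (nhds π)) ∧
    (∀ x : ℝ, ∀ y ∈ Ioo (0:ℝ) 1, θ₀ x y = π - θ₀ (-x) y) := by
  intro θ₀
  refine ⟨?_, ?_, ?_⟩
  · -- harmonicity
    intro x y hy
    have hs : 0 < Real.sin (π * y) := by
      apply Real.sin_pos_of_pos_of_lt_pi
      · exact mul_pos Real.pi_pos hy.1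
      · nlinarith [Real.pi_pos, hy.2]
    set s := Real.sin (π * y) with hsdef
    set h := Real.sinh (π * x) with hhdef
    -- x part
    have e1 : (fun x'' => θ₀ x'' y)
        = fun x'' => π / 2 - Real.arctan (Real.sinh (π * x'') / s) := rfl
    have e2 : deriv (fun x'' => θ₀ x'' y)
        = fun x' => -(π * s * Real.cosh (π * x')) / (s ^ 2 + Real.sinh (π * x') ^ 2) := by
      funext x'
      rw [e1]
      exact (hdx s hs x').deriv
    have ex2 : deriv (fun x' => deriv (fun x'' => θ₀ x'' y) x') x
        = (-(π * s * (Real.sinh (π * x) * π)) * (s ^ 2 + Real.sinh (π * x) ^ 2)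
          - -(π * s * Real.cosh (π * x)) * (2 * Real.sinh (π * x) * (Real.cosh (π * x) * π)))
          / (s ^ 2 + Real.sinh (π * x) ^ 2) ^ 2 := by
      simp only [e2]
      exact (hdx2 s hs x).deriv
    -- y part
    have hev : (fun y' => deriv (fun y'' => θ₀ x y'') y')
        =ᶠ[nhds y] fun y' => π * h * Real.cos (π * y') / (Real.sin (π * y') ^ 2 + h ^ 2) := by
      filter_upwards [isOpen_Ioo.mem_nhds hy] with y' hy'
      exact (hdy h y' hy').deriv
    have ey2 : deriv (fun y' => deriv (fun y'' => θ₀ x y'') y') y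
        = (π * h * (-Real.sin (π * y) * π) * (Real.sin (π * y) ^ 2 + h ^ 2)
          - π * h * Real.cos (π * y) * (2 * Real.sin (π * y) * (Real.cos (π * y) * π)))
          / (Real.sin (π * y) ^ 2 + h ^ 2) ^ 2 := by
      rw [hev.deriv_eq]
      exact (hdy2 h y hy).deriv
    rw [ex2, ey2, ← hsdef, ← hhdef]
    have hc : Real.cosh (π * x) ^ 2 = 1 + h ^ 2 := by rw [hhdef, Real.cosh_sq]; ring
    have hco : Real.cos (π * y) ^ 2 = 1 - s ^ 2 := by rw [hsdef]; exact Real.cos_sq' (π * y)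
    have hD : (s ^ 2 + h ^ 2) ≠ 0 := by positivity
    rw [← add_div, div_eq_zero_iff]
    left
    linear_combination (2 * π ^ 2 * s * h) * hc - (2 * π ^ 2 * s * h) * hco
  · -- limits
    intro y hy
    have hs : 0 < Real.sin (π * y) := by
      apply Real.sin_pos_of_pos_of_lt_pi
      · exact mul_pos Real.pi_pos hy.1
      · nlinarith [Real.pi_pos, hy.2]
    constructor
    · have h1 : Tendsto (fun x : ℝ => π * x) atTop atTop :=
        Tendsto.const_mul_atTop Real.pi_pos tendsto_id
      have h2 : Tendsto (fun x : ℝ => Real.sinh (π * x) / Real.sin (π * y)) atTop atTop :=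
        (sinh_tendsto_atTop.comp h1).atTop_div_const hs
      have h3 : Tendsto (fun x : ℝ => Real.arctan (Real.sinh (π * x) / Real.sin (π * y)))
          atTop (nhds (π / 2)) :=
        (Real.tendsto_arctan_atTop.comp h2).mono_right nhdsWithin_le_nhds
      have h4 := (tendsto_const_nhds (x := π / 2) (f := atTop (α := ℝ))).sub h3
      simpa using h4
    · have h1 : Tendsto (fun x : ℝ => π * x) atBot atBot :=
        Tendsto.const_mul_atBot Real.pi_pos tendsto_id
      have h2 : Tendsto (fun x : ℝ => Real.sinh (π * x) / Real.sin (π * y)) atBot atBot :=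
        (sinh_tendsto_atBot.comp h1).atBot_div_const hs
      have h3 : Tendsto (fun x : ℝ => Real.arctan (Real.sinh (π * x) / Real.sin (π * y)))
          atBot (nhds (-(π / 2))) :=
        (Real.tendsto_arctan_atBot.comp h2).mono_right nhdsWithin_le_nhds
      have h4 := (tendsto_const_nhds (x := π / 2) (f := atBot (α := ℝ))).sub h3
      have : π / 2 - -(π / 2) = π := by ring
      rw [this] at h4
      exact h4
  · -- symmetry
    intro x y hy
    simp only [θ₀, mul_neg, Real.sinh_neg, neg_div, Real.arctan_neg]
    ring
end

section
/- For 0 < ε < 1/2, let K̂_ε(k) = k(sinh(kε) − tanh(k/2)cosh(kε)) and K̂(k) = −k tanh(k/2). Then for every k ∈ ℝ, K̂(k) ≤ K̂_ε(k) ≤ 0, and K̂_ε(k) decreases monotonically to K̂(k) as ε decreases to 0. -/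
open Real Filter Set

lemma dn_key (k a b : ℝ) (h : a ≤ b) :
    k * Real.sinh (k * a) ≤ k * Real.sinh (k * b) := by
  rcases le_total 0 k with hk | hk
  · exact mul_le_mul_of_nonneg_left
      (Real.sinh_le_sinh.mpr (mul_le_mul_of_nonneg_left h hk)) hk
  · exact mul_le_mul_of_nonpos_left
      (Real.sinh_le_sinh.mpr (mul_le_mul_of_nonpos_left h hk)) hk

lemma dn_ident (ε k : ℝ) :
    k * (Real.sinh (k * ε) - Real.tanh (k / 2) * Real.cosh (k * ε)) =
      k * Real.sinh (k * (ε - 1 / 2)) / Real.cosh (k / 2) := by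
  have hc : Real.cosh (k / 2) ≠ 0 := (Real.cosh_pos _).ne'
  rw [Real.tanh_eq_sinh_div_cosh]
  field_simp
  rw [show k * (ε * 2 - 1) / 2 = k * ε - k / 2 by ring, Real.sinh_sub]
  ring

lemma dn_mono (k ε₁ ε₂ : ℝ) (h : ε₁ ≤ ε₂) :
    k * (Real.sinh (k * ε₁) - Real.tanh (k / 2) * Real.cosh (k * ε₁)) ≤
      k * (Real.sinh (k * ε₂) - Real.tanh (k / 2) * Real.cosh (k * ε₂)) := by
  rw [dn_ident, dn_ident]
  exact (div_le_div_iff_of_pos_right (Real.cosh_pos _)).mpr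
    (dn_key k _ _ (by linarith))

/-- For `0 < ε < 1/2`, the Fourier symbols `K̂_ε(k) = k(sinh(kε) − tanh(k/2)cosh(kε))`
satisfy `K̂(k) ≤ K̂_ε(k) ≤ 0` where `K̂(k) = −k tanh(k/2)`, are monotone in `ε`, and
decrease to `K̂(k)` as `ε ↓ 0`. -/
theorem dirichlet_to_neumann_symbols :
    let Khat : ℝ → ℝ := fun k => -(k * Real.tanh (k / 2))
    let Khate : ℝ → ℝ → ℝ := fun ε k =>
      k * (Real.sinh (k * ε) - Real.tanh (k / 2) * Real.cosh (k * ε))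
    (∀ k : ℝ, ∀ ε ∈ Ioo (0:ℝ) (1 / 2), Khat k ≤ Khate ε k ∧ Khate ε k ≤ 0) ∧
    (∀ k : ℝ, ∀ ε₁ ∈ Ioo (0:ℝ) (1 / 2), ∀ ε₂ ∈ Ioo (0:ℝ) (1 / 2),
      ε₁ ≤ ε₂ → Khate ε₁ k ≤ Khate ε₂ k) ∧
    (∀ k : ℝ, Tendsto (fun ε => Khate ε k) (nhdsWithin 0 (Ioo 0 (1 / 2)))
      (nhds (Khat k))) := by
  intro Khat Khate
  have hzero : ∀ k, Khate 0 k = Khat k := by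
    intro k
    simp [Khat, Khate]
  have hhalf : ∀ k, Khate (1 / 2) k = 0 := by
    intro k
    have hc : Real.cosh (k / 2) ≠ 0 := (Real.cosh_pos _).ne'
    simp only [Khate, Real.tanh_eq_sinh_div_cosh]
    rw [show k * (1 / 2) = k / 2 by ring]
    field_simp
    ring
  refine ⟨?_, ?_, ?_⟩
  · intro k ε hε
    constructor
    · rw [← hzero k]
      exact dn_mono k 0 ε hε.1.le
    · rw [← hhalf k]
      exact dn_mono k ε (1 / 2) hε.2.le
  · intro k ε₁ _ ε₂ _ h
    exact dn_mono k ε₁ ε₂ h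
  · intro k
    have hcont : Continuous (fun ε : ℝ => Khate ε k) := by
      simp only [Khate]
      fun_prop
    have := (hcont.tendsto 0).mono_left (nhdsWithin_le_nhds (s := Ioo 0 (1 / 2)))
    rwa [hzero k] at this
end

section
/- Let Ω = (−M, M) × (0,1) with M > 0 and let θ ∈ C²(Ω) ∩ C¹(Ω̄) satisfy Δθ = h sin θ in Ω with h ≥ 0, 0 ≤ θ ≤ 2π in Ω, the Neumann condition ∂_ν θ = −γ sin(2θ) on (−M,M) × {0,1} with γ > 0, θ = 0 on {M} × (0,1), θ = 2π on {−M} × (0,1), and suppose θ is not identically 0 nor identically 2π. Then 0 < θ < 2π everywhere in (−M, M) × [0, 1]. -/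
open Real Set

set_option linter.unreachableTactic false
set_option linter.unnecessarySeqFocus false
set_option linter.unusedTactic false
set_option linter.deprecated false
open Real Set Filter Topology

noncomputable section StrictBoundsAux

/-- Squared Euclidean distance on `ℝ × ℝ`. -/
def rho2 (p q : ℝ × ℝ) : ℝ := (p.1 - q.1)^2 + (p.2 - q.2)^2

lemma rho2_nonneg (p q : ℝ × ℝ) : 0 ≤ rho2 p q := by
  have := sq_nonneg (p.1 - q.1); have := sq_nonneg (p.2 - q.2); unfold rho2; linarith

lemma continuous_rho2 (c : ℝ × ℝ) : Continuous fun p => rho2 p c := by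
  unfold rho2; fun_prop

lemma rho2_eq_zero {p q : ℝ × ℝ} (h : rho2 p q = 0) : p = q := by
  unfold rho2 at h
  have h1 : p.1 = q.1 := by nlinarith [sq_nonneg (p.1 - q.1), sq_nonneg (p.2 - q.2)]
  have h2 : p.2 = q.2 := by nlinarith [sq_nonneg (p.1 - q.1), sq_nonneg (p.2 - q.2)]
  exact Prod.ext h1 h2

/-- triangle inequality for the Euclidean distance `√rho2`. -/
lemma rho_triangle (q p z : ℝ × ℝ) :
    Real.sqrt (rho2 q z) ≤ Real.sqrt (rho2 q p) + Real.sqrt (rho2 p z) := by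
  have hqp := rho2_nonneg q p
  have hpz := rho2_nonneg p z
  have hqz := rho2_nonneg q z
  have cs : (q.1-p.1) * (p.1-z.1) + (q.2-p.2) * (p.2-z.2) ≤
      Real.sqrt (rho2 q p) * Real.sqrt (rho2 p z) := by
    set d := (q.1-p.1) * (p.1-z.1) + (q.2-p.2) * (p.2-z.2) with hd
    have h1 : d^2 ≤ rho2 q p * rho2 p z := by
      unfold rho2; rw [hd]; nlinarith [sq_nonneg ((q.1-p.1)*(p.2-z.2) - (q.2-p.2)*(p.1-z.1))]
    calc d ≤ |d| := le_abs_self d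
      _ = Real.sqrt (d^2) := (Real.sqrt_sq_eq_abs d).symm
      _ ≤ Real.sqrt (rho2 q p * rho2 p z) := Real.sqrt_le_sqrt h1
      _ = Real.sqrt (rho2 q p) * Real.sqrt (rho2 p z) := Real.sqrt_mul hqp _
  have expand : rho2 q z = rho2 q p + rho2 p z +
      2 * ((q.1-p.1) * (p.1-z.1) + (q.2-p.2) * (p.2-z.2)) := by unfold rho2; ring
  have h2 : rho2 q z ≤ (Real.sqrt (rho2 q p) + Real.sqrt (rho2 p z))^2 := by
    rw [expand]; nlinarith [Real.sq_sqrt hqp, Real.sq_sqrt hpz]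
  calc Real.sqrt (rho2 q z) ≤ Real.sqrt ((Real.sqrt (rho2 q p) + Real.sqrt (rho2 p z))^2) :=
        Real.sqrt_le_sqrt h2
    _ = Real.sqrt (rho2 q p) + Real.sqrt (rho2 p z) := by
        rw [Real.sqrt_sq (by positivity)]

lemma rho_le_of_rho2_le {p q : ℝ × ℝ} {r : ℝ} (hr : 0 ≤ r) (h : rho2 p q ≤ r^2) :
    Real.sqrt (rho2 p q) ≤ r := by
  calc Real.sqrt (rho2 p q) ≤ Real.sqrt (r^2) := Real.sqrt_le_sqrt h
    _ = r := Real.sqrt_sq hr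

lemma rho2_le_of_rho_le {p q : ℝ × ℝ} {r : ℝ} (h : Real.sqrt (rho2 p q) ≤ r) :
    rho2 p q ≤ r^2 := by
  have h0 := rho2_nonneg p q
  nlinarith [Real.sq_sqrt h0, Real.sqrt_nonneg (rho2 p q)]

/-- The (coordinatewise iterated) Laplacian. -/
def lap (u : ℝ × ℝ → ℝ) (p : ℝ × ℝ) : ℝ :=
  deriv (fun x' => deriv (fun x'' => u (x'', p.2)) x') p.1
    + deriv (fun y' => deriv (fun y'' => u (p.1, y'')) y') p.2

end StrictBoundsAux

section P2

/-- If `g` has derivative `m` within `s` at `x₀` and the slopes are eventually `≥ K`,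
then `K ≤ m`. -/
lemma le_deriv_of_slope {g : ℝ → ℝ} {m K : ℝ} {s : Set ℝ} {x₀ : ℝ}
    (hg : HasDerivWithinAt g m s x₀) (hne : (𝓝[s \ {x₀}] x₀).NeBot)
    (hs : ∀ᶠ y in 𝓝[s \ {x₀}] x₀, K ≤ slope g x₀ y) : K ≤ m :=
  @ge_of_tendsto _ _ _ _ _ _ _ _ _ hne (hasDerivWithinAt_iff_tendsto_slope.mp hg) hs

lemma deriv_le_of_slope {g : ℝ → ℝ} {m K : ℝ} {s : Set ℝ} {x₀ : ℝ}
    (hg : HasDerivWithinAt g m s x₀) (hne : (𝓝[s \ {x₀}] x₀).NeBot)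
    (hs : ∀ᶠ y in 𝓝[s \ {x₀}] x₀, slope g x₀ y ≤ K) : m ≤ K :=
  @le_of_tendsto _ _ _ _ _ _ _ _ _ hne (hasDerivWithinAt_iff_tendsto_slope.mp hg) hs

/-- Second derivative is nonnegative at a local minimum (1D). -/
lemma d2_nonneg_of_isLocalMin {g : ℝ → ℝ} {a : ℝ}
    (hg : ContDiffAt ℝ 2 g a) (hmin : IsLocalMin g a) :
    0 ≤ deriv (deriv g) a := by
  by_contra hcon
  push_neg at hcon
  obtain ⟨V₀, hV₀, hgV₀⟩ := hg.contDiffOn (le_refl _) (by simp)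
  set V := interior V₀ with hV
  have hVo : IsOpen V := isOpen_interior
  have haV : a ∈ V := mem_interior_iff_mem_nhds.mpr hV₀
  have hgV : ContDiffOn ℝ 2 g V := hgV₀.mono interior_subset
  have hdiffg : ∀ x ∈ V, DifferentiableAt ℝ g x := fun x hx =>
    ((hgV.differentiableOn (by norm_num)) x hx).differentiableAt (hVo.mem_nhds hx)
  have hg1 : ContDiffOn ℝ 1 (deriv g) V := hgV.deriv_of_isOpen hVo (by norm_num)
  have hdiffg' : DifferentiableAt ℝ (deriv g) a :=
    ((hg1.differentiableOn (by norm_num)) a haV).differentiableAt (hVo.mem_nhds haV)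
  have h'0 : deriv g a = 0 := hmin.deriv_eq_zero
  have hslope : Tendsto (slope (deriv g) a) (𝓝[≠] a) (𝓝 (deriv (deriv g) a)) := by
    have := (hasDerivAt_deriv_iff.mpr hdiffg')
    rw [hasDerivAt_iff_tendsto_slope] at this
    exact this
  have hev : ∀ᶠ x in 𝓝[≠] a, slope (deriv g) a x < 0 :=
    hslope.eventually (Filter.Tendsto.eventually_lt_const hcon tendsto_id)
  -- get a radius where everything holds
  have hev2 : ∀ᶠ x in 𝓝 a, x ∈ V ∧ g a ≤ g x := (hVo.eventually_mem haV).and hmin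
  have hev' : ∀ᶠ x in 𝓝 a, x ∈ ({a}ᶜ : Set ℝ) → slope (deriv g) a x < 0 :=
    eventually_nhdsWithin_iff.mp hev
  obtain ⟨η₁, hη₁, H1⟩ := Metric.eventually_nhds_iff.mp hev'
  obtain ⟨η₂, hη₂, H2⟩ := Metric.eventually_nhds_iff.mp hev2
  set η := min η₁ η₂ / 2 with hη
  have hηpos : 0 < η := by positivity
  have hkey : ∀ x ∈ Ioo a (a + η), deriv g x < 0 := by
    intro x hx
    have hxa : x ≠ a := ne_of_gt hx.1
    have hd : dist x a < η₁ := by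
      rw [Real.dist_eq, abs_of_pos (by linarith [hx.1])]
      have : η ≤ η₁ / 2 := by
        rw [hη]; have := min_le_left η₁ η₂; linarith
      linarith [hx.2]
    have := H1 hd hxa
    have hsl : slope (deriv g) a x = deriv g x / (x - a) := by
      rw [slope_def_field, h'0]; simp
    rw [hsl] at this
    have hxapos : 0 < x - a := by linarith [hx.1]
    have := (div_lt_iff₀ hxapos).mp this
    linarith
  have hsub : Icc a (a + η) ⊆ V := by
    intro x hx
    have hd : dist x a < η₂ := by
      rw [Real.dist_eq, abs_of_nonneg (by linarith [hx.1])]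
      have : η ≤ η₂ / 2 := by
        rw [hη]; have := min_le_right η₁ η₂; linarith
      linarith [hx.2]
    exact (H2 hd).1
  have hcontg : ContinuousOn g (Icc a (a + η)) := (hgV.continuousOn).mono hsub
  have hanti : StrictAntiOn g (Icc a (a + η)) := by
    apply strictAntiOn_of_deriv_neg (convex_Icc _ _) hcontg
    intro x hx
    rw [interior_Icc] at hx
    exact hkey x hx
  have h1 : g (a + η) < g a :=
    hanti (left_mem_Icc.mpr (by linarith)) (right_mem_Icc.mpr (by linarith)) (by linarith)
  have h2 : g a ≤ g (a + η) := by
    have hd : dist (a + η) a < η₂ := by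
      rw [Real.dist_eq, abs_of_nonneg (by linarith)]
      have : η ≤ η₂ / 2 := by rw [hη]; have := min_le_right η₁ η₂; linarith
      linarith
    exact (H2 hd).2
  linarith

end P2

section P3

lemma hasDerivAt_gauss (α b k x : ℝ) :
    HasDerivAt (fun t => Real.exp (-(α * ((t - b)^2 + k))))
      ((-(2*α*(x-b))) * Real.exp (-(α * ((x-b)^2 + k)))) x := by
  have h1 : HasDerivAt (fun t : ℝ => -(α * ((t - b)^2 + k))) (-(2*α*(x-b))) x := by
    have h2 : HasDerivAt (fun t : ℝ => (t - b)^2) (2*(x-b)) x := by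
      have := ((hasDerivAt_id x).sub_const b).fun_pow 2
      simpa using this
    have h3 := ((h2.add_const k).const_mul α).fun_neg
    exact h3.congr_deriv (by ring)
  convert h1.exp using 1; ring

lemma deriv_gauss (α b k : ℝ) :
    deriv (fun t => Real.exp (-(α * ((t - b)^2 + k)))) =
      fun x => (-(2*α*(x-b))) * Real.exp (-(α * ((x-b)^2 + k))) := by
  funext x; exact (hasDerivAt_gauss α b k x).deriv

lemma d2_gauss (α b k x : ℝ) :
    deriv (deriv (fun t => Real.exp (-(α * ((t - b)^2 + k))))) x =
      (4*α^2*(x-b)^2 - 2*α) * Real.exp (-(α * ((x-b)^2 + k))) := by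
  rw [deriv_gauss]
  have h1 : HasDerivAt (fun t : ℝ => (-(2*α*(t-b))) * Real.exp (-(α * ((t - b)^2 + k))))
      ((-(2*α)) * Real.exp (-(α * ((x-b)^2 + k))) +
        (-(2*α*(x-b))) * ((-(2*α*(x-b))) * Real.exp (-(α * ((x-b)^2 + k))))) x := by
    have ha : HasDerivAt (fun t : ℝ => -(2*α*(t-b))) (-(2*α)) x := by
      have := (((hasDerivAt_id x).sub_const b).const_mul (2*α)).fun_neg
      simpa using this
    exact ha.mul (hasDerivAt_gauss α b k x)
  rw [h1.deriv]; ring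

lemma contDiff_gauss2 (α : ℝ) (c : ℝ × ℝ) :
    ContDiff ℝ 2 (fun p : ℝ × ℝ => Real.exp (-(α * ((p.1 - c.1)^2 + (p.2 - c.2)^2)))) := by
  exact Real.contDiff_exp.comp (ContDiff.neg (contDiff_const.mul
    (((contDiff_fst.sub contDiff_const).pow 2).add ((contDiff_snd.sub contDiff_const).pow 2))))

lemma contDiff_gauss1 (α b k : ℝ) :
    ContDiff ℝ 2 (fun t : ℝ => Real.exp (-(α * ((t - b)^2 + k)))) := by
  exact Real.contDiff_exp.comp (ContDiff.neg (contDiff_const.mul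
    (((contDiff_id.sub contDiff_const).pow 2).add contDiff_const)))

/-- Linearity of the 1D second derivative for `f - ε•g + C` with `f` C² near `a`, `g` C². -/
lemma d2_sub_aux {f g : ℝ → ℝ} {a ε C : ℝ} (hf : ContDiffAt ℝ 2 f a) (hg : ContDiff ℝ 2 g) :
    deriv (deriv (fun x => f x - ε * g x + C)) a
      = deriv (deriv f) a - ε * deriv (deriv g) a := by
  obtain ⟨V₀, hV₀, hfV₀⟩ := hf.contDiffOn (le_refl _) (by simp)
  set V := interior V₀
  have hVo : IsOpen V := isOpen_interior
  have haV : a ∈ V := mem_interior_iff_mem_nhds.mpr hV₀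
  have hfV : ContDiffOn ℝ 2 f V := hfV₀.mono interior_subset
  have hdifff : ∀ x ∈ V, DifferentiableAt ℝ f x := fun x hx =>
    ((hfV.differentiableOn (by norm_num)) x hx).differentiableAt (hVo.mem_nhds hx)
  have hdiffg : Differentiable ℝ g := hg.differentiable (by norm_num)
  have hE : (deriv (fun x => f x - ε * g x + C)) =ᶠ[𝓝 a]
      (fun x => deriv f x - ε * deriv g x) := by
    filter_upwards [hVo.mem_nhds haV] with x hx
    rw [deriv_add_const, deriv_fun_sub (hdifff x hx) ((hdiffg x).const_mul ε),
      deriv_const_mul ε (hdiffg x)]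
  rw [hE.deriv_eq]
  have hdf' : DifferentiableAt ℝ (deriv f) a := by
    have hf1 : ContDiffOn ℝ 1 (deriv f) V := hfV.deriv_of_isOpen hVo (by norm_num)
    exact ((hf1.differentiableOn (by norm_num)) a haV).differentiableAt (hVo.mem_nhds haV)
  have hdg' : DifferentiableAt ℝ (deriv g) a := by
    have : ContDiff ℝ (1+1) g := by norm_num at hg ⊢; exact hg
    have := (contDiff_succ_iff_deriv.mp this).2.2
    exact (this.differentiable (by norm_num)).differentiableAt
  rw [deriv_fun_sub hdf' (hdg'.const_mul ε), deriv_const_mul ε hdg']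

/-- local min of a 2D function transfers to coordinate slices. -/
lemma isLocalMin_slice1 {f : ℝ × ℝ → ℝ} {p : ℝ × ℝ} (hmin : IsLocalMin f p) :
    IsLocalMin (fun x => f (x, p.2)) p.1 := by
  have ht : Filter.Tendsto (fun x : ℝ => (x, p.2)) (𝓝 p.1) (𝓝 p) := by
    have : ContinuousAt (fun x : ℝ => (x, p.2)) p.1 := by fun_prop
    simpa using this.tendsto
  have := ht.eventually hmin
  unfold IsLocalMin IsMinFilter
  simpa using this

lemma isLocalMin_slice2 {f : ℝ × ℝ → ℝ} {p : ℝ × ℝ} (hmin : IsLocalMin f p) :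
    IsLocalMin (fun y => f (p.1, y)) p.2 := by
  have ht : Filter.Tendsto (fun y : ℝ => (p.1, y)) (𝓝 p.2) (𝓝 p) := by
    have : ContinuousAt (fun y : ℝ => (p.1, y)) p.2 := by fun_prop
    simpa using this.tendsto
  have := ht.eventually hmin
  unfold IsLocalMin IsMinFilter
  simpa using this

lemma contDiffAt_slice1 {f : ℝ × ℝ → ℝ} {p : ℝ × ℝ} (hf : ContDiffAt ℝ 2 f p) :
    ContDiffAt ℝ 2 (fun x => f (x, p.2)) p.1 := by
  have h : ContDiffAt ℝ 2 (fun x : ℝ => (x, p.2)) p.1 :=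
    (contDiffAt_id.prodMk contDiffAt_const)
  have := hf.comp p.1 (by simpa using h)
  simpa [Function.comp_def] using this

lemma contDiffAt_slice2 {f : ℝ × ℝ → ℝ} {p : ℝ × ℝ} (hf : ContDiffAt ℝ 2 f p) :
    ContDiffAt ℝ 2 (fun y => f (p.1, y)) p.2 := by
  have h : ContDiffAt ℝ 2 (fun y : ℝ => (p.1, y)) p.2 :=
    (contDiffAt_const.prodMk contDiffAt_id)
  have := hf.comp p.2 (by simpa using h)
  simpa [Function.comp_def] using this

end P3

section P4
set_option maxHeartbeats 1000000
open Real Set Filter Topology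

lemma subset_closedBall_of_rho2 {c : ℝ × ℝ} {r : ℝ} (hr : 0 ≤ r) :
    {p : ℝ × ℝ | rho2 p c ≤ r^2} ⊆ Metric.closedBall c r := by
  intro p hp
  simp only [mem_setOf_eq] at hp
  unfold rho2 at hp
  have h1 : |p.1 - c.1| ≤ r := by
    rw [← Real.sqrt_sq_eq_abs]
    calc Real.sqrt ((p.1-c.1)^2) ≤ Real.sqrt (r^2) := by
          apply Real.sqrt_le_sqrt; nlinarith [sq_nonneg (p.2 - c.2)]
      _ = r := Real.sqrt_sq hr
  have h2 : |p.2 - c.2| ≤ r := by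
    rw [← Real.sqrt_sq_eq_abs]
    calc Real.sqrt ((p.2-c.2)^2) ≤ Real.sqrt (r^2) := by
          apply Real.sqrt_le_sqrt; nlinarith [sq_nonneg (p.1 - c.1)]
      _ = r := Real.sqrt_sq hr
  rw [Metric.mem_closedBall, Prod.dist_eq]
  simp only [Real.dist_eq]
  exact max_le h1 h2

/-- **Hopf lemma** (quantitative version on a disc). -/
lemma hopf_growth (h : ℝ) (hh : 0 ≤ h) (u : ℝ × ℝ → ℝ) (c : ℝ × ℝ) (R : ℝ) (hR : 0 < R)
    (hcont : ContinuousOn u {p | rho2 p c ≤ R^2})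
    (hC2 : ∀ p, rho2 p c < R^2 → ContDiffAt ℝ 2 u p)
    (hΔ : ∀ p, rho2 p c < R^2 → lap u p ≤ h * u p)
    (hnn : ∀ p, rho2 p c ≤ R^2 → 0 ≤ u p)
    (hpos : ∀ p, rho2 p c < R^2 → 0 < u p) :
    ∃ K > 0, ∀ z, rho2 z c = R^2 → ∀ t ∈ Ioc 0 (R/2),
      K * t ≤ u (z + t • (R⁻¹ • (c - z))) := by
  have hR2 : (R:ℝ)^2 ≠ 0 := by positivity
  set s := Real.sqrt (4 + h*R^2) with hsdef
  have hs : s^2 = 4 + h*R^2 := Real.sq_sqrt (by positivity)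
  have hs2 : 2 ≤ s := by nlinarith [Real.sqrt_nonneg (4 + h*R^2)]
  set α := (3 + s)/R^2 with hαdef
  have hα : 0 < α := div_pos (by linarith) (by positivity)
  have e1 : α * R^2 = 3 + s := by rw [hαdef]; field_simp
  have h2 : (α^2*R^2 - 4*α - h) * R^2 = 2*s + 1 := by
    linear_combination (α*R^2 + s - 1) * e1 + hs
  have keypos : 0 < α^2*R^2 - 4*α - h := by
    nlinarith [mul_pos hR hR, h2, hs2]
  -- minimum on the inner sphere
  set Sph := {p : ℝ × ℝ | rho2 p c = (R/2)^2} with hSph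
  have hSphsub : Sph ⊆ {p | rho2 p c ≤ R^2} := by
    intro p hp; simp only [hSph, mem_setOf_eq] at hp ⊢; nlinarith
  have hSphC : IsCompact Sph := by
    apply Metric.isCompact_of_isClosed_isBounded
    · exact isClosed_eq (continuous_rho2 c) continuous_const
    · exact Metric.isBounded_closedBall.subset
        (hSphsub.trans (subset_closedBall_of_rho2 hR.le))
  have hSphne : Sph.Nonempty := by
    refine ⟨(c.1 + R/2, c.2), ?_⟩
    simp only [hSph, mem_setOf_eq, rho2]; ring
  obtain ⟨zδ, hzδSph, hzδmin⟩ := hSphC.exists_isMinOn hSphne (hcont.mono hSphsub)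
  set δ := u zδ with hδdef
  have hδ : 0 < δ := hpos zδ (by
    have := hzδSph; simp only [hSph, mem_setOf_eq] at this; rw [this]; nlinarith)
  set denom := Real.exp (-(α*(R/2)^2)) - Real.exp (-(α*R^2)) with hdenomdef
  have hdenom : 0 < denom := by
    apply sub_pos.mpr
    apply Real.exp_lt_exp.mpr
    nlinarith
  set ε := δ / denom with hεdef
  have hε : 0 < ε := div_pos hδ hdenom
  -- Claim 1 : comparison with the barrier on the annulus
  have claim1 : ∀ p, (R/2)^2 ≤ rho2 p c → rho2 p c ≤ R^2 →
      ε * (Real.exp (-(α * rho2 p c)) - Real.exp (-(α*R^2))) ≤ u p := by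
    set A := {p : ℝ × ℝ | (R/2)^2 ≤ rho2 p c ∧ rho2 p c ≤ R^2} with hA
    have hAsub : A ⊆ {p | rho2 p c ≤ R^2} := fun p hp => hp.2
    have hAC : IsCompact A := by
      apply Metric.isCompact_of_isClosed_isBounded
      · exact (isClosed_le continuous_const (continuous_rho2 c)).inter
          (isClosed_le (continuous_rho2 c) continuous_const)
      · exact Metric.isBounded_closedBall.subset
          (hAsub.trans (subset_closedBall_of_rho2 hR.le))
    set v := fun p : ℝ × ℝ => u p - ε * Real.exp (-(α * rho2 p c)) + ε * Real.exp (-(α*R^2))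
      with hvdef
    have hvcont : ContinuousOn v A := by
      apply ContinuousOn.add
      · apply ContinuousOn.sub (hcont.mono hAsub)
        apply Continuous.continuousOn
        exact continuous_const.mul ((continuous_const.mul (continuous_rho2 c)).neg.rexp)
      · exact continuousOn_const
    have hAne : A.Nonempty := by
      refine ⟨(c.1 + R/2, c.2), ?_, ?_⟩ <;> · simp only [mem_setOf_eq, rho2]; nlinarith
    obtain ⟨p₀, hp₀A, hp₀min⟩ := hAC.exists_isMinOn hAne hvcont
    suffices hv0 : 0 ≤ v p₀ by
      intro p hp1 hp2
      have h3 : v p₀ ≤ v p := hp₀min (show p ∈ A from ⟨hp1, hp2⟩)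
      simp only [hvdef] at h3 hv0
      linarith
    by_contra hneg
    push_neg at hneg
    -- p₀ is not on the outer sphere
    have houter : rho2 p₀ c ≠ R^2 := by
      intro hE
      have h0 : 0 ≤ u p₀ := hnn p₀ (le_of_eq hE)
      simp only [hvdef, hE] at hneg
      nlinarith
    -- p₀ is not on the inner sphere
    have hinner : rho2 p₀ c ≠ (R/2)^2 := by
      intro hE
      have hmem : p₀ ∈ Sph := by simp only [hSph, mem_setOf_eq, hE]
      have h1 : δ ≤ u p₀ := hzδmin hmem
      have h2 : ε * denom = δ := by rw [hεdef]; field_simp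
      simp only [hvdef, hE] at hneg
      rw [hdenomdef] at h2
      nlinarith
    have hstrict1 : (R/2)^2 < rho2 p₀ c := lt_of_le_of_ne hp₀A.1 (Ne.symm hinner)
    have hstrict2 : rho2 p₀ c < R^2 := lt_of_le_of_ne hp₀A.2 houter
    have hlocmin : IsLocalMin v p₀ := by
      apply hp₀min.isLocalMin
      have hO : IsOpen {p : ℝ × ℝ | (R/2)^2 < rho2 p c ∧ rho2 p c < R^2} :=
        (isOpen_lt continuous_const (continuous_rho2 c)).inter
          (isOpen_lt (continuous_rho2 c) continuous_const)
      exact Filter.mem_of_superset (hO.mem_nhds ⟨hstrict1, hstrict2⟩)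
        (fun p hp => ⟨hp.1.le, hp.2.le⟩)
    have hC2p : ContDiffAt ℝ 2 u p₀ := hC2 p₀ hstrict2
    -- second derivative inequalities via slices
    set kx := (p₀.2 - c.2)^2 with hkx
    set ky := (p₀.1 - c.1)^2 with hky
    have hslicex : (fun x => v (x, p₀.2)) = fun x =>
        (fun x' => u (x', p₀.2)) x - ε * (fun t => Real.exp (-(α * ((t - c.1)^2 + kx)))) x
          + ε * Real.exp (-(α*R^2)) := by
      funext x; simp only [hvdef, rho2, hkx]
    have hslicey : (fun y => v (p₀.1, y)) = fun y =>
        (fun y' => u (p₀.1, y')) y - ε * (fun t => Real.exp (-(α * ((t - c.2)^2 + ky)))) y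
          + ε * Real.exp (-(α*R^2)) := by
      funext y; simp only [hvdef, rho2, hky]; ring_nf
    have hd2x : 0 ≤ deriv (deriv (fun x => v (x, p₀.2))) p₀.1 := by
      apply d2_nonneg_of_isLocalMin _ (isLocalMin_slice1 hlocmin)
      rw [hslicex]
      exact ((contDiffAt_slice1 hC2p).sub
        (contDiffAt_const.mul (contDiff_gauss1 α c.1 kx).contDiffAt)).add contDiffAt_const
    have hd2y : 0 ≤ deriv (deriv (fun y => v (p₀.1, y))) p₀.2 := by
      apply d2_nonneg_of_isLocalMin _ (isLocalMin_slice2 hlocmin)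
      rw [hslicey]
      exact ((contDiffAt_slice2 hC2p).sub
        (contDiffAt_const.mul (contDiff_gauss1 α c.2 ky).contDiffAt)).add contDiffAt_const
    have hlinx : deriv (deriv (fun x => v (x, p₀.2))) p₀.1
        = deriv (deriv (fun x' => u (x', p₀.2))) p₀.1
          - ε * ((4*α^2*(p₀.1-c.1)^2 - 2*α) * Real.exp (-(α * ((p₀.1-c.1)^2 + kx)))) := by
      rw [hslicex, d2_sub_aux (contDiffAt_slice1 hC2p) (contDiff_gauss1 α c.1 kx),
        d2_gauss]
    have hliny : deriv (deriv (fun y => v (p₀.1, y))) p₀.2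
        = deriv (deriv (fun y' => u (p₀.1, y'))) p₀.2
          - ε * ((4*α^2*(p₀.2-c.2)^2 - 2*α) * Real.exp (-(α * ((p₀.2-c.2)^2 + ky)))) := by
      rw [hslicey, d2_sub_aux (contDiffAt_slice2 hC2p) (contDiff_gauss1 α c.2 ky),
        d2_gauss]
    -- put everything together
    set ρ := rho2 p₀ c with hρ
    have hEx : Real.exp (-(α * ((p₀.1-c.1)^2 + kx))) = Real.exp (-(α * ρ)) := by
      rw [hkx, hρ, rho2]
    have hEy : Real.exp (-(α * ((p₀.2-c.2)^2 + ky))) = Real.exp (-(α * ρ)) := by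
      rw [hky, hρ, rho2]; ring_nf
    have hlap : lap u p₀ ≤ h * u p₀ := hΔ p₀ hstrict2
    have hlapv : 0 ≤ lap u p₀ - ε * ((4*α^2*((p₀.1-c.1)^2 + (p₀.2-c.2)^2) - 4*α)
        * Real.exp (-(α * ρ))) := by
      have := hd2x
      rw [hlinx, hEx] at this
      have h2 := hd2y
      rw [hliny, hEy] at h2
      unfold lap
      ring_nf at this h2 ⊢
      linarith
    set E := Real.exp (-(α * ρ)) with hEdef
    have hEpos : 0 < E := Real.exp_pos _
    have hCpos : 0 < Real.exp (-(α * R^2)) := Real.exp_pos _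
    have hup : u p₀ < ε * (E - Real.exp (-(α*R^2))) := by
      simp only [hvdef, ← hρ, ← hEdef] at hneg
      linarith only [hneg]
    have hρval : (p₀.1-c.1)^2 + (p₀.2-c.2)^2 = ρ := by rw [hρ, rho2]
    rw [hρval] at hlapv
    set B := 4*α^2*ρ - 4*α with hBdef
    have hBge : α^2*R^2 - 4*α ≤ B := by
      have hmm := mul_le_mul_of_nonneg_left hstrict1.le (by positivity : (0:ℝ) ≤ 4*α^2)
      rw [hBdef]; linarith only [hmm]
    have hupE : u p₀ ≤ ε * E := by
      linarith only [hup, mul_pos hε hCpos]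
    have step1 : 0 ≤ ε * E * (h - B) := by
      have hmul : h * u p₀ ≤ h * (ε * E) := mul_le_mul_of_nonneg_left hupE hh
      linarith only [hlapv, hlap, hmul]
    have step2 : h - B < 0 := by linarith only [hBge, keypos]
    have step3 : ε * E * (h - B) < 0 := mul_neg_of_pos_of_neg (mul_pos hε hEpos) step2
    linarith
  -- Claim 2 : growth estimate along the inward radius
  refine ⟨ε * Real.exp (-(α*R^2)) * α * R, by positivity, ?_⟩
  intro z hz t ht
  obtain ⟨ht0, htR⟩ := ht
  set q := z + t • (R⁻¹ • (c - z)) with hqdef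
  have hq1 : q.1 - c.1 = (1 - t/R) * (z.1 - c.1) := by
    simp only [hqdef, Prod.fst_add, Prod.smul_fst, Prod.fst_sub, smul_eq_mul]
    field_simp; ring
  have hq2 : q.2 - c.2 = (1 - t/R) * (z.2 - c.2) := by
    simp only [hqdef, Prod.snd_add, Prod.smul_snd, Prod.snd_sub, smul_eq_mul]
    field_simp; ring
  have hzval : (z.1-c.1)^2 + (z.2-c.2)^2 = R^2 := by rw [← hz, rho2]
  have hfact : (1 - t/R) * R = R - t := by field_simp
  have hq : rho2 q c = (R - t)^2 := by
    rw [rho2, hq1, hq2]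
    have : ((1-t/R)*(z.1-c.1))^2 + ((1-t/R)*(z.2-c.2))^2 = (1-t/R)^2 * R^2 := by
      rw [← hzval]; ring
    rw [this]
    linear_combination ((1-t/R)*R + (R-t)) * hfact
  have hb1 : (R/2)^2 ≤ (R-t)^2 := by nlinarith
  have hb2 : (R-t)^2 ≤ R^2 := by nlinarith
  have hcl := claim1 q (by rw [hq]; exact hb1) (by rw [hq]; exact hb2)
  rw [hq] at hcl
  -- lower bound for the barrier
  have hexp : Real.exp (-(α*(R-t)^2))
      = Real.exp (-(α*R^2)) * Real.exp (α*(R^2 - (R-t)^2)) := by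
    rw [← Real.exp_add]; ring_nf
  have hexpineq := Real.add_one_le_exp (α*(R^2 - (R-t)^2))
  have hquad : R^2 - (R-t)^2 = t * (2*R - t) := by ring
  have hCpos : (0:ℝ) < Real.exp (-(α*R^2)) := Real.exp_pos _
  have hlow : ε * Real.exp (-(α*R^2)) * α * R * t
      ≤ ε * (Real.exp (-(α*(R-t)^2)) - Real.exp (-(α*R^2))) := by
    rw [hexp]
    have h1 : Real.exp (-(α*R^2)) * (α*(R^2 - (R-t)^2))
        ≤ Real.exp (-(α*R^2)) * Real.exp (α*(R^2 - (R-t)^2)) - Real.exp (-(α*R^2)) := by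
      nlinarith [hexpineq, hCpos]
    have h3 : α * R * t ≤ α*(R^2 - (R-t)^2) := by
      have haux : 0 ≤ α * t * (R - t) := mul_nonneg (mul_nonneg hα.le ht0.le) (by linarith)
      rw [hquad]; linarith only [haux]
    have h4 : Real.exp (-(α*R^2)) * (α*R*t) ≤ Real.exp (-(α*R^2)) * (α*(R^2-(R-t)^2)) :=
      mul_le_mul_of_nonneg_left h3 hCpos.le
    nlinarith [mul_le_mul_of_nonneg_left (h4.trans h1) hε.le]
  calc ε * Real.exp (-(α*R^2)) * α * R * t
      ≤ ε * (Real.exp (-(α*(R-t)^2)) - Real.exp (-(α*R^2))) := hlow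
    _ ≤ u q := hcl

end P4

section P5
set_option maxHeartbeats 1000000
open Real Set Filter Topology

lemma rho2_comm (p q : ℝ × ℝ) : rho2 p q = rho2 q p := by unfold rho2; ring

lemma rho2_self (p : ℝ × ℝ) : rho2 p p = 0 := by unfold rho2; ring

lemma eq_const_of_closure {X : Type*} [TopologicalSpace X] {f : X → ℝ} {T T' : Set X}
    {p : X} {c : ℝ} (hf : ContinuousWithinAt f T p) (hsub : T' ⊆ T)
    (hp : p ∈ closure T') (hc : ∀ q ∈ T', f q = c) : f p = c := by
  haveI : (𝓝[T'] p).NeBot := mem_closure_iff_nhdsWithin_neBot.mp hp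
  have h1 : Tendsto f (𝓝[T'] p) (𝓝 (f p)) := hf.tendsto.mono_left (nhdsWithin_mono p hsub)
  have h2 : Tendsto f (𝓝[T'] p) (𝓝 c) := by
    apply Tendsto.congr' _ tendsto_const_nhds
    filter_upwards [self_mem_nhdsWithin] with q hq
    exact (hc q hq).symm
  exact tendsto_nhds_unique h1 h2

/-- Strong minimum principle on the rectangle. -/
lemma interior_pos (M h : ℝ) (hM : 0 < M) (hh : 0 ≤ h) (u : ℝ × ℝ → ℝ)
    (hcont : ContinuousOn u (Icc (-M) M ×ˢ Icc (0:ℝ) 1))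
    (hC2 : ContDiffOn ℝ 2 u (Ioo (-M) M ×ˢ Ioo (0:ℝ) 1))
    (hΔ : ∀ p ∈ Ioo (-M) M ×ˢ Ioo (0:ℝ) 1, lap u p ≤ h * u p)
    (hnn : ∀ p ∈ Icc (-M) M ×ˢ Icc (0:ℝ) 1, 0 ≤ u p)
    (q₀ : ℝ × ℝ) (hq₀S : q₀ ∈ Icc (-M) M ×ˢ Icc (0:ℝ) 1) (hq₀ : u q₀ ≠ 0) :
    ∀ p ∈ Ioo (-M) M ×ˢ Ioo (0:ℝ) 1, 0 < u p := by
  set S := Icc (-M) M ×ˢ Icc (0:ℝ) 1 with hSdef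
  set Ω := Ioo (-M) M ×ˢ Ioo (0:ℝ) 1 with hΩdef
  have hΩopen : IsOpen Ω := isOpen_Ioo.prod isOpen_Ioo
  have hΩS : Ω ⊆ S := prod_mono Ioo_subset_Icc_self Ioo_subset_Icc_self
  have hclosure : closure Ω = S := by
    rw [hΩdef, hSdef, closure_prod_eq, closure_Ioo (by intro hE; linarith : (-M) ≠ M),
      closure_Ioo (by norm_num : (0:ℝ) ≠ 1)]
  have hF1 : IsClosed (S ∩ u ⁻¹' {0}) :=
    hcont.preimage_isClosed_of_isClosed (isClosed_Icc.prod isClosed_Icc) isClosed_singleton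
  -- Main step : no interior zero on the frontier of the zero set
  have frontier : ∀ z ∈ Ω, u z = 0 → z ∈ closure {p | p ∈ Ω ∧ u p ≠ 0} → False := by
    intro z hzΩ hz0 hzcl
    obtain ⟨η, hη, hball⟩ := Metric.isOpen_iff.mp hΩopen z hzΩ
    set d := η/3 with hddef
    have hdpos : 0 < d := by positivity
    have hdball : ∀ q, rho2 q z ≤ (2*d)^2 → q ∈ Ω := by
      intro q hq
      apply hball
      have h1 := subset_closedBall_of_rho2 (by positivity : (0:ℝ) ≤ 2*d) hq
      rw [Metric.mem_closedBall] at h1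
      rw [Metric.mem_ball]
      calc dist q z ≤ 2*d := h1
        _ < η := by rw [hddef]; linarith
    -- a nearby point of positivity
    have hop : IsOpen (Metric.ball z (d/4)) := Metric.isOpen_ball
    have hne : (Metric.ball z (d/4) ∩ {p | p ∈ Ω ∧ u p ≠ 0}).Nonempty :=
      (mem_closure_iff.mp hzcl) _ hop (Metric.mem_ball_self (by positivity))
    obtain ⟨p, hpball, hpΩ, hpne⟩ := hne
    have hppos : 0 < u p := lt_of_le_of_ne (hnn p (hΩS hpΩ)) (Ne.symm hpne)
    have hrho_pz : rho2 p z ≤ (d/2)^2 := by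
      rw [Metric.mem_ball, Prod.dist_eq] at hpball
      have h1 : |p.1 - z.1| < d/4 := by
        rw [← Real.dist_eq]; exact lt_of_le_of_lt (le_max_left _ _) hpball
      have h2 : |p.2 - z.2| < d/4 := by
        rw [← Real.dist_eq]; exact lt_of_le_of_lt (le_max_right _ _) hpball
      have h3 : (p.1 - z.1)^2 ≤ (d/4)^2 := by
        rw [← sq_abs]; exact pow_le_pow_left₀ (abs_nonneg _) h1.le 2
      have h4 : (p.2 - z.2)^2 ≤ (d/4)^2 := by
        rw [← sq_abs]; exact pow_le_pow_left₀ (abs_nonneg _) h2.le 2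
      unfold rho2; nlinarith
    -- nearest zero
    set K := {q : ℝ × ℝ | rho2 q z ≤ d^2} ∩ (S ∩ u ⁻¹' {0}) with hKdef
    have hKclosed : IsClosed K :=
      (isClosed_le (continuous_rho2 z) continuous_const).inter hF1
    have hKcompact : IsCompact K := by
      apply Metric.isCompact_of_isClosed_isBounded hKclosed
      exact Metric.isBounded_closedBall.subset
        ((inter_subset_left).trans (subset_closedBall_of_rho2 hdpos.le))
    have hzK : z ∈ K := by
      refine ⟨?_, hΩS hzΩ, hz0⟩
      simp only [mem_setOf_eq, rho2_self]
      positivity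
    have hKne : K.Nonempty := ⟨z, hzK⟩
    obtain ⟨z', hz'K, hz'min⟩ := hKcompact.exists_isMinOn hKne
      ((continuous_rho2 p).continuousOn)
    set r2 := rho2 z' p with hr2def
    have hr2nn : 0 ≤ r2 := rho2_nonneg _ _
    have hr2pos : 0 < r2 := by
      rcases lt_or_eq_of_le hr2nn with h1 | h1
      · exact h1
      · exfalso
        have : z' = p := rho2_eq_zero h1.symm
        rw [this] at hz'K
        exact hpne hz'K.2.2
    set r := Real.sqrt r2 with hrdef
    have hr : 0 < r := Real.sqrt_pos.mpr hr2pos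
    have hrsq : r^2 = r2 := Real.sq_sqrt hr2nn
    have hrd : r ≤ d/2 := by
      rw [hrdef]
      apply rho_le_of_rho2_le (by positivity)
      have h1 : rho2 z p ≤ (d/2)^2 := by rw [rho2_comm]; exact hrho_pz
      exact le_trans (hz'min hzK) h1
    have hrho_pz' : Real.sqrt (rho2 p z) ≤ d/2 := rho_le_of_rho2_le (by positivity) hrho_pz
    have hballΩ : ∀ q, rho2 q p ≤ r^2 → q ∈ Ω := by
      intro q hq
      apply hdball
      apply rho2_le_of_rho_le
      calc Real.sqrt (rho2 q z) ≤ Real.sqrt (rho2 q p) + Real.sqrt (rho2 p z) :=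
            rho_triangle q p z
        _ ≤ r + d/2 := add_le_add (rho_le_of_rho2_le hr.le hq) hrho_pz'
        _ ≤ 2*d := by linarith
    have hballK : ∀ q, rho2 q p ≤ r^2 → u q = 0 → q ∈ K := by
      intro q hq hq0
      refine ⟨?_, hΩS (hballΩ q hq), hq0⟩
      apply rho2_le_of_rho_le
      calc Real.sqrt (rho2 q z) ≤ Real.sqrt (rho2 q p) + Real.sqrt (rho2 p z) :=
            rho_triangle q p z
        _ ≤ r + d/2 := add_le_add (rho_le_of_rho2_le hr.le hq) hrho_pz'
        _ ≤ d := by linarith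
    have hposball : ∀ q, rho2 q p < r^2 → 0 < u q := by
      intro q hq
      rcases lt_or_eq_of_le (hnn q (hΩS (hballΩ q hq.le))) with h1 | h1
      · exact h1
      · exfalso
        have hqK : q ∈ K := hballK q hq.le h1.symm
        have := hz'min hqK
        simp only [← hr2def] at this
        rw [hrsq] at hq
        exact absurd (lt_of_le_of_lt this hq) (lt_irrefl _)
    -- apply Hopf
    obtain ⟨Kc, hKc, hgrow⟩ := hopf_growth h hh u p r hr
      (hcont.mono (fun q hq => hΩS (hballΩ q hq)))
      (fun q hq => hC2.contDiffAt (hΩopen.mem_nhds (hballΩ q hq.le)))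
      (fun q hq => hΔ q (hballΩ q hq.le))
      (fun q hq => hnn q (hΩS (hballΩ q hq)))
      hposball
    have hz'sphere : rho2 z' p = r^2 := by rw [hrsq]
    have hgrow' := hgrow z' hz'sphere
    -- the directional derivative at `z'` vanishes, contradiction
    have hz'Ω : z' ∈ Ω := by
      apply hdball
      have h1 : rho2 z' z ≤ d^2 := hz'K.1
      nlinarith
    have hz'0 : u z' = 0 := hz'K.2.2
    set v := r⁻¹ • (p - z') with hvdef
    set g := fun t : ℝ => u (z' + t • v) with hgdef
    have hγcont : Continuous fun t : ℝ => z' + t • v := by fun_prop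
    have hγ0 : (fun t : ℝ => z' + t • v) 0 = z' := by simp
    have hulocmin : IsLocalMin u z' := by
      unfold IsLocalMin IsMinFilter
      filter_upwards [hΩopen.mem_nhds hz'Ω] with q hq
      rw [hz'0]; exact hnn q (hΩS hq)
    have hglocmin : IsLocalMin g 0 := by
      have ht : Tendsto (fun t : ℝ => z' + t • v) (𝓝 0) (𝓝 z') := by
        have := hγcont.tendsto 0
        simpa using this
      have := ht.eventually hulocmin
      unfold IsLocalMin IsMinFilter
      simpa [hgdef, hz'0] using this
    have hgdiff : DifferentiableAt ℝ g 0 := by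
      have hu : DifferentiableAt ℝ u z' :=
        ((hC2.contDiffAt (hΩopen.mem_nhds hz'Ω)).differentiableAt (by norm_num))
      have hγ : DifferentiableAt ℝ (fun t : ℝ => z' + t • v) 0 := by
        apply DifferentiableAt.const_add
        exact (differentiableAt_id).smul_const v
      have hu' : DifferentiableAt ℝ u ((fun t : ℝ => z' + t • v) 0) := by
        rw [hγ0]; exact hu
      have := hu'.comp 0 hγ
      simpa [hgdef, Function.comp_def] using this
    have hgd0 : deriv g 0 = 0 := hglocmin.deriv_eq_zero
    have hKle : Kc ≤ deriv g 0 := by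
      apply le_deriv_of_slope (hgdiff.hasDerivAt.hasDerivWithinAt (s := Ioi 0))
      · have hdiffset : Ioi (0:ℝ) \ {0} = Ioi 0 := by
          apply diff_singleton_eq_self; simp
        rw [hdiffset]; exact nhdsGT_neBot 0
      · have hev1 : ∀ᶠ y in 𝓝[Ioi (0:ℝ) \ {0}] 0, y < r/2 := by
          apply eventually_nhdsWithin_of_eventually_nhds
          exact eventually_lt_nhds (by positivity)
        filter_upwards [hev1, self_mem_nhdsWithin] with y h1 h2
        have hy0 : 0 < y := h2.1
        have hKy := hgrow' y ⟨hy0, h1.le⟩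
        have hg0 : g 0 = 0 := by simp [hgdef, hz'0]
        rw [slope_def_field, hg0, sub_zero, sub_zero, le_div_iff₀ hy0]
        exact hKy
    rw [hgd0] at hKle
    linarith
  -- conclude by connectedness
  intro p hp
  by_contra hnpos
  push_neg at hnpos
  have hp0 : u p = 0 := le_antisymm hnpos (hnn p (hΩS hp))
  set U := {x : ℝ × ℝ | ∀ᶠ q in 𝓝 x, q ∈ Ω → u q = 0} with hUdef
  have hUopen : IsOpen U := isOpen_setOf_eventually_nhds
  have hZU : ∀ z ∈ Ω, u z = 0 → z ∈ U := by
    intro z hz hz0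
    by_contra hnU
    apply frontier z hz hz0
    rw [mem_closure_iff_frequently]
    simp only [hUdef, mem_setOf_eq, Filter.not_eventually] at hnU
    apply hnU.mono
    intro q hq
    push_neg at hq
    exact hq
  have hconn : IsPreconnected Ω :=
    ((convex_Ioo (-M) M).prod (convex_Ioo (0:ℝ) 1)).isPreconnected
  by_cases hall : ∀ q ∈ Ω, u q = 0
  · -- contradiction with witness q₀
    exact hq₀ (eq_const_of_closure (hcont.continuousWithinAt hq₀S) hΩS
      (by rw [hclosure]; exact hq₀S) hall)
  · push_neg at hall
    obtain ⟨q₁, hq₁Ω, hq₁ne⟩ := hall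
    have hcover : Ω ⊆ U ∪ (S ∩ u ⁻¹' {0})ᶜ := by
      intro x hx
      by_cases hx0 : u x = 0
      · exact Or.inl (hZU x hx hx0)
      · exact Or.inr (fun hmem => hx0 hmem.2)
    have h1 : (Ω ∩ U).Nonempty := ⟨p, hp, hZU p hp hp0⟩
    have h2 : (Ω ∩ (S ∩ u ⁻¹' {0})ᶜ).Nonempty := ⟨q₁, hq₁Ω, fun hmem => hq₁ne hmem.2⟩
    obtain ⟨x, hxΩ, hxU, hxF⟩ := hconn U _ hUopen hF1.isOpen_compl hcover h1 h2
    have hx0 : u x = 0 := (hxU.self_of_nhds) hxΩ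
    exact hxF ⟨hΩS hxΩ, hx0⟩

end P5

section P6
set_option maxHeartbeats 1000000
open Real Set Filter Topology

lemma abs_bounds {a R : ℝ} (hR : 0 < R) (h : a^2 ≤ R^2) : -R ≤ a ∧ a ≤ R := by
  constructor <;> nlinarith [sq_nonneg (a+R), sq_nonneg (a-R)]

lemma abs_bounds_lt {a R : ℝ} (hR : 0 < R) (h : a^2 < R^2) : -R < a ∧ a < R := by
  constructor <;> nlinarith [sq_nonneg (a+R), sq_nonneg (a-R)]

lemma clopen_interval {ψ : ℝ → ℝ} {a b : ℝ}
    (hop : ∀ x ∈ Ioo a b, ψ x = 0 → ∀ᶠ y in 𝓝 x, y ∈ Ioo a b → ψ y = 0)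
    (hcl : IsClosed (Icc a b ∩ ψ ⁻¹' {0}))
    {x₀ : ℝ} (hx₀ : x₀ ∈ Ioo a b) (h0 : ψ x₀ = 0) :
    ∀ x ∈ Ioo a b, ψ x = 0 := by
  set U := {x | ∀ᶠ y in 𝓝 x, y ∈ Ioo a b → ψ y = 0} with hU
  have hUopen : IsOpen U := isOpen_setOf_eventually_nhds
  intro x hx
  by_contra hne
  have hcover : Ioo a b ⊆ U ∪ (Icc a b ∩ ψ ⁻¹' {0})ᶜ := by
    intro y hy
    by_cases hy0 : ψ y = 0
    · exact Or.inl (hop y hy hy0)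
    · exact Or.inr (fun hmem => hy0 hmem.2)
  have h1 : (Ioo a b ∩ U).Nonempty := ⟨x₀, hx₀, hop x₀ hx₀ h0⟩
  have h2 : (Ioo a b ∩ (Icc a b ∩ ψ ⁻¹' {0})ᶜ).Nonempty := ⟨x, hx, fun hmem => hne hmem.2⟩
  obtain ⟨y, hyI, hyU, hyF⟩ := isPreconnected_Ioo U _ hUopen hcl.isOpen_compl hcover h1 h2
  exact hyF ⟨Ioo_subset_Icc_self hyI, hyU.self_of_nhds hyI⟩

/-- No zeros of `u` on a horizontal edge. -/
lemma edge_no_zero (M h γ : ℝ) (hM : 0 < M) (hh : 0 ≤ h) (hγ : 0 < γ)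
    (u : ℝ × ℝ → ℝ) (y₀ σ : ℝ)
    (hcase : (y₀ = 0 ∧ σ = 1) ∨ (y₀ = 1 ∧ σ = -1))
    (hC1 : ContDiffOn ℝ 1 u (Icc (-M) M ×ˢ Icc (0:ℝ) 1))
    (hC2 : ContDiffOn ℝ 2 u (Ioo (-M) M ×ˢ Ioo (0:ℝ) 1))
    (hΔ : ∀ p ∈ Ioo (-M) M ×ˢ Ioo (0:ℝ) 1, lap u p ≤ h * u p)
    (hnn : ∀ p ∈ Icc (-M) M ×ˢ Icc (0:ℝ) 1, 0 ≤ u p)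
    (hpos : ∀ p ∈ Ioo (-M) M ×ˢ Ioo (0:ℝ) 1, 0 < u p)
    (hhon : ∀ x ∈ Ioo (-M) M, Real.sin (2 * u (x, y₀)) ≠ 0 →
      deriv (fun y => u (x, y)) y₀ = σ * (γ * Real.sin (2 * u (x, y₀))))
    (hcorner : ¬ ∀ x ∈ Ioo (-M) M, u (x, y₀) = 0) :
    ∀ x ∈ Ioo (-M) M, u (x, y₀) ≠ 0 := by
  set S := Icc (-M) M ×ˢ Icc (0:ℝ) 1 with hSdef
  set Ω := Ioo (-M) M ×ˢ Ioo (0:ℝ) 1 with hΩdef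
  have hMM : -M < M := by linarith
  have hΩopen : IsOpen Ω := isOpen_Ioo.prod isOpen_Ioo
  have hΩS : Ω ⊆ S := prod_mono Ioo_subset_Icc_self Ioo_subset_Icc_self
  have hy₀Icc : y₀ ∈ Icc (0:ℝ) 1 := by
    rcases hcase with ⟨hy, _⟩ | ⟨hy, _⟩ <;> rw [hy] <;> norm_num
  have hUD : UniqueDiffOn ℝ S := (uniqueDiffOn_Icc hMM).prod (uniqueDiffOn_Icc one_pos)
  have hmemS : ∀ x ∈ Icc (-M) M, ((x, y₀) : ℝ × ℝ) ∈ S := fun x hx => ⟨hx, hy₀Icc⟩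
  set a : ℝ → ℝ := fun x => fderivWithin ℝ u S (x, y₀) ((0:ℝ), (1:ℝ)) with hadef
  have hderivW : ∀ x ∈ Icc (-M) M,
      HasDerivWithinAt (fun y => u (x, y)) (a x) (Icc 0 1) y₀ := by
    intro x hx
    have hdw : DifferentiableWithinAt ℝ u S (x, y₀) :=
      (hC1.differentiableOn one_ne_zero) _ (hmemS x hx)
    have hF := hdw.hasFDerivWithinAt
    have hι : HasDerivWithinAt (fun y : ℝ => ((x, y) : ℝ × ℝ)) ((0:ℝ), (1:ℝ)) (Icc 0 1) y₀ := by
      exact ((hasDerivAt_const y₀ x).prodMk (hasDerivAt_id y₀)).hasDerivWithinAt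
    have hmap : MapsTo (fun y : ℝ => ((x, y) : ℝ × ℝ)) (Icc 0 1) S := fun y hy => ⟨hx, hy⟩
    have := hF.comp_hasDerivWithinAt y₀ hι hmap
    simpa [Function.comp_def] using this
  have hacont : ContinuousOn a (Icc (-M) M) := by
    have h1 : ContinuousOn (fderivWithin ℝ u S) S := hC1.continuousOn_fderivWithin hUD le_rfl
    have h2 : ContinuousOn (fun x : ℝ => fderivWithin ℝ u S (x, y₀)) (Icc (-M) M) :=
      h1.comp (Continuous.continuousOn (by fun_prop)) (fun x hx => hmemS x hx)
    exact (ContinuousLinearMap.apply ℝ ℝ ((0:ℝ),(1:ℝ))).continuous.comp_continuousOn h2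
  have hψcont : ContinuousOn (fun x => u (x, y₀)) (Icc (-M) M) :=
    hC1.continuousOn.comp (Continuous.continuousOn (by fun_prop)) (fun x hx => hmemS x hx)
  have hlink : ∀ x ∈ Ioo (-M) M, Real.sin (2 * u (x, y₀)) ≠ 0 →
      a x = σ * (γ * Real.sin (2 * u (x, y₀))) := by
    intro x hx hsin
    have hval := hhon x hx hsin
    have hσne : σ ≠ 0 := by rcases hcase with ⟨_, hσ⟩ | ⟨_, hσ⟩ <;> rw [hσ] <;> norm_num
    have hdiff : DifferentiableAt ℝ (fun y => u (x, y)) y₀ := by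
      by_contra hnd
      rw [deriv_zero_of_not_differentiableAt hnd] at hval
      exact (mul_ne_zero hσne (mul_ne_zero (ne_of_gt hγ) hsin)) hval.symm
    have hud : UniqueDiffWithinAt ℝ (Icc (0:ℝ) 1) y₀ := (uniqueDiffOn_Icc one_pos) y₀ hy₀Icc
    have h1 := (hderivW x (Ioo_subset_Icc_self hx)).derivWithin hud
    have h2 := (hdiff.hasDerivAt.hasDerivWithinAt (s := Icc (0:ℝ) 1)).derivWithin hud
    rw [← h1, h2]
    exact hval
  -- Hopf inequality at edge zeros
  have hedgeHopf : ∀ x₀ ∈ Ioo (-M) M, u (x₀, y₀) = 0 → 0 < σ * a x₀ := by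
    intro x₀ hx₀ h0
    have hxa : -M < x₀ := hx₀.1
    have hxb : x₀ < M := hx₀.2
    set R := (min (1/2) (min (M - x₀) (x₀ + M))) / 2 with hRdef
    have hminpos : 0 < min (1/2 : ℝ) (min (M - x₀) (x₀ + M)) :=
      lt_min (by norm_num) (lt_min (by linarith) (by linarith))
    have hR : 0 < R := by rw [hRdef]; exact div_pos hminpos two_pos
    have hR14 : R ≤ 1/4 := by
      have := min_le_left (1/2 : ℝ) (min (M - x₀) (x₀ + M))
      rw [hRdef]; linarith
    have hRMx : R ≤ (M - x₀)/2 := by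
      have := (min_le_right (1/2 : ℝ) _).trans (min_le_left (M - x₀) (x₀ + M))
      rw [hRdef]; linarith
    have hRxM : R ≤ (x₀ + M)/2 := by
      have := (min_le_right (1/2 : ℝ) _).trans (min_le_right (M - x₀) (x₀ + M))
      rw [hRdef]; linarith
    set c : ℝ × ℝ := (x₀, y₀ + σ*R) with hcdef
    have hsub1 : ∀ q, rho2 q c ≤ R^2 → q ∈ S := by
      intro q hq
      have h1 : (q.1 - x₀)^2 ≤ R^2 := by
        have := sq_nonneg (q.2 - (y₀ + σ*R)); unfold rho2 at hq; simp only [hcdef] at hq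
        nlinarith
      have h2 : (q.2 - (y₀ + σ*R))^2 ≤ R^2 := by
        have := sq_nonneg (q.1 - x₀); unfold rho2 at hq; simp only [hcdef] at hq
        nlinarith
      obtain ⟨h1a, h1b⟩ := abs_bounds hR h1
      obtain ⟨h2a, h2b⟩ := abs_bounds hR h2
      refine ⟨⟨by linarith, by linarith⟩, ?_⟩
      rcases hcase with ⟨hy, hσ⟩ | ⟨hy, hσ⟩ <;> rw [hy, hσ] at h2a h2b <;>
        exact ⟨by linarith, by linarith⟩
    have hsub2 : ∀ q, rho2 q c < R^2 → q ∈ Ω := by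
      intro q hq
      have h1 : (q.1 - x₀)^2 < R^2 := by
        have := sq_nonneg (q.2 - (y₀ + σ*R)); unfold rho2 at hq; simp only [hcdef] at hq
        nlinarith
      have h2 : (q.2 - (y₀ + σ*R))^2 < R^2 := by
        have := sq_nonneg (q.1 - x₀); unfold rho2 at hq; simp only [hcdef] at hq
        nlinarith
      obtain ⟨h1a, h1b⟩ := abs_bounds_lt hR h1
      obtain ⟨h2a, h2b⟩ := abs_bounds_lt hR h2
      refine ⟨⟨by linarith, by linarith⟩, ?_⟩
      rcases hcase with ⟨hy, hσ⟩ | ⟨hy, hσ⟩ <;> rw [hy, hσ] at h2a h2b <;>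
        exact ⟨by linarith, by linarith⟩
    obtain ⟨K, hK, hgrow⟩ := hopf_growth h hh u c R hR
      (hC1.continuousOn.mono hsub1)
      (fun q hq => hC2.contDiffAt (hΩopen.mem_nhds (hsub2 q hq)))
      (fun q hq => hΔ q (hsub2 q hq))
      (fun q hq => hnn q (hsub1 q hq))
      (fun q hq => hpos q (hsub2 q hq))
    have hσsq : σ^2 = 1 := by rcases hcase with ⟨_, hσ⟩ | ⟨_, hσ⟩ <;> rw [hσ] <;> norm_num
    have hzs : rho2 ((x₀, y₀) : ℝ × ℝ) c = R^2 := by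
      simp only [hcdef, rho2]; nlinarith [hσsq]
    have hgrow' := hgrow _ hzs
    have hpt : ∀ t : ℝ, ((x₀, y₀) : ℝ × ℝ) + t • (R⁻¹ • (c - (x₀, y₀))) = (x₀, y₀ + t*σ) := by
      intro t
      have hRne : R ≠ 0 := ne_of_gt hR
      apply Prod.ext <;> simp [hcdef, Prod.fst_add, Prod.snd_add] <;> field_simp <;> simp
    have hgrow2 : ∀ t ∈ Ioc 0 (R/2), K * t ≤ u (x₀, y₀ + t*σ) := by
      intro t ht
      have := hgrow' t ht
      rwa [hpt t] at this
    have hdw := hderivW x₀ (Ioo_subset_Icc_self hx₀)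
    rcases hcase with ⟨hy, hσ⟩ | ⟨hy, hσ⟩
    · -- bottom edge : K ≤ a x₀
      rw [hσ, one_mul]
      have hdiffset : Icc (0:ℝ) 1 \ {0} = Ioc 0 1 := Icc_diff_left
      have hNB : (𝓝[Icc (0:ℝ) 1 \ {(0:ℝ)}] (0:ℝ)).NeBot := by
        rw [hdiffset]
        apply mem_closure_iff_nhdsWithin_neBot.mp
        rw [closure_Ioc (by norm_num : (0:ℝ) ≠ 1)]
        exact ⟨le_refl 0, by norm_num⟩
      have hKle : K ≤ a x₀ := by
        rw [hy] at hdw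
        apply le_deriv_of_slope hdw hNB
        have hev1 : ∀ᶠ y in 𝓝[Icc (0:ℝ) 1 \ {(0:ℝ)}] 0, y < R/2 := by
          apply eventually_nhdsWithin_of_eventually_nhds
          exact eventually_lt_nhds (by positivity)
        filter_upwards [hev1, self_mem_nhdsWithin] with y h1 h2
        rw [hdiffset] at h2
        have hy0 : 0 < y := h2.1
        have h4 := hgrow2 y ⟨hy0, h1.le⟩
        rw [hσ, hy] at h4
        have h5 : (0:ℝ) + y * 1 = y := by ring
        rw [h5] at h4
        rw [hy] at h0
        rw [slope_def_field, h0, sub_zero, sub_zero, le_div_iff₀ hy0]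
        exact h4
      linarith
    · -- top edge : a x₀ ≤ -K
      rw [hσ]
      have hdiffset : Icc (0:ℝ) 1 \ {1} = Ico 0 1 := Icc_sdiff_right
      have hNB : (𝓝[Icc (0:ℝ) 1 \ {(1:ℝ)}] (1:ℝ)).NeBot := by
        rw [hdiffset]
        apply mem_closure_iff_nhdsWithin_neBot.mp
        rw [closure_Ico (by norm_num : (0:ℝ) ≠ 1)]
        exact ⟨by norm_num, le_refl 1⟩
      have hKle : a x₀ ≤ -K := by
        rw [hy] at hdw
        apply deriv_le_of_slope hdw hNB
        have hev1 : ∀ᶠ y in 𝓝[Icc (0:ℝ) 1 \ {(1:ℝ)}] 1, 1 - R/2 < y := by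
          apply eventually_nhdsWithin_of_eventually_nhds
          have : (1:ℝ) - R/2 < 1 := by linarith
          exact eventually_gt_nhds this
        filter_upwards [hev1, self_mem_nhdsWithin] with y h1 h2
        rw [hdiffset] at h2
        have hy1 : y < 1 := h2.2
        have ht : 1 - y ∈ Ioc 0 (R/2) := ⟨by linarith, by linarith⟩
        have h4 := hgrow2 (1-y) ht
        rw [hσ, hy] at h4
        have h5 : (1:ℝ) + (1-y) * (-1) = y := by ring
        rw [h5] at h4
        rw [hy] at h0
        rw [slope_def_field, h0, sub_zero]
        rw [div_le_iff_of_neg (by linarith : y - 1 < 0)]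
        linarith
      linarith
  -- conclude with the connectedness argument
  intro x hx h0
  apply hcorner
  have hop : ∀ x₁ ∈ Ioo (-M) M, u (x₁, y₀) = 0 →
      ∀ᶠ y in 𝓝 x₁, y ∈ Ioo (-M) M → u (y, y₀) = 0 := by
    intro x₁ hx₁ h₁
    by_contra hnev
    rw [Filter.not_eventually] at hnev
    have hfreq : ∃ᶠ y in 𝓝 x₁, y ∈ {y | y ∈ Ioo (-M) M ∧ u (y, y₀) ≠ 0} := by
      apply hnev.mono
      intro y hy
      push_neg at hy
      exact hy
    set D := {y | y ∈ Ioo (-M) M ∧ u (y, y₀) ≠ 0} with hD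
    have hDsub : D ⊆ Icc (-M) M := fun y hy => Ioo_subset_Icc_self hy.1
    haveI hNB : (𝓝[D] x₁).NeBot :=
      mem_closure_iff_nhdsWithin_neBot.mp (mem_closure_iff_frequently.mpr hfreq)
    have hψ : Tendsto (fun y => u (y, y₀)) (𝓝[D] x₁) (𝓝 0) := by
      have h1 := (hψcont.continuousWithinAt (Ioo_subset_Icc_self hx₁)).tendsto
      rw [h₁] at h1
      exact h1.mono_left (nhdsWithin_mono _ hDsub)
    have ha : Tendsto a (𝓝[D] x₁) (𝓝 (a x₁)) :=
      ((hacont.continuousWithinAt (Ioo_subset_Icc_self hx₁)).tendsto).mono_left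
        (nhdsWithin_mono _ hDsub)
    have hev : ∀ᶠ y in 𝓝[D] x₁, a y = σ * (γ * Real.sin (2 * u (y, y₀))) := by
      have hsmall : ∀ᶠ y in 𝓝[D] x₁, u (y, y₀) < π/4 :=
        hψ.eventually (eventually_lt_nhds (by positivity))
      filter_upwards [hsmall, self_mem_nhdsWithin] with y h1 h2
      have hy : y ∈ Ioo (-M) M := h2.1
      have hune : u (y, y₀) ≠ 0 := h2.2
      have hupos : 0 < u (y, y₀) :=
        lt_of_le_of_ne (hnn _ ⟨Ioo_subset_Icc_self hy, hy₀Icc⟩) (Ne.symm hune)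
      have hsin : 0 < Real.sin (2 * u (y, y₀)) := by
        apply Real.sin_pos_of_pos_of_lt_pi (by linarith)
        have hπ : 0 < π := Real.pi_pos
        linarith
      exact hlink y hy (ne_of_gt hsin)
    have hlim2 : Tendsto (fun y => σ * (γ * Real.sin (2 * u (y, y₀)))) (𝓝[D] x₁) (𝓝 0) := by
      have h1 : Tendsto (fun y => 2 * u (y, y₀)) (𝓝[D] x₁) (𝓝 (2*0)) := hψ.const_mul 2
      have h2 : Tendsto (fun y => Real.sin (2 * u (y, y₀))) (𝓝[D] x₁) (𝓝 (Real.sin (2*0))) :=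
        (Real.continuous_sin.continuousAt.tendsto).comp h1
      have h3 := ((h2.const_mul γ).const_mul σ)
      simpa using h3
    have haz : a x₁ = 0 := by
      apply tendsto_nhds_unique ha
      exact Tendsto.congr' (hev.mono fun y hy => hy.symm) hlim2
    have := hedgeHopf x₁ hx₁ h₁
    rw [haz] at this
    simp at this
  have hcl : IsClosed (Icc (-M) M ∩ (fun x => u (x, y₀)) ⁻¹' {0}) :=
    hψcont.preimage_isClosed_of_isClosed isClosed_Icc isClosed_singleton
  exact clopen_interval hop hcl hx h0

end P6

section P7
set_option maxHeartbeats 1000000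
open Real Set Filter Topology

lemma corner_val_vert (M : ℝ) (hM : 0 < M) (θ : ℝ × ℝ → ℝ)
    (hcont : ContinuousOn θ (Icc (-M) M ×ˢ Icc (0:ℝ) 1))
    (x₀ : ℝ) (hx₀ : x₀ ∈ Icc (-M) M) (v : ℝ)
    (hv : ∀ y ∈ Ioo (0:ℝ) 1, θ (x₀, y) = v)
    (y₀ : ℝ) (hy₀ : y₀ ∈ Icc (0:ℝ) 1) : θ (x₀, y₀) = v := by
  apply eq_const_of_closure (T' := {x₀} ×ˢ Ioo (0:ℝ) 1)
    (hcont.continuousWithinAt ⟨hx₀, hy₀⟩)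
  · intro q hq
    exact ⟨(mem_singleton_iff.mp hq.1) ▸ hx₀, Ioo_subset_Icc_self hq.2⟩
  · rw [closure_prod_eq, closure_singleton, closure_Ioo (by norm_num : (0:ℝ) ≠ 1)]
    exact ⟨rfl, hy₀⟩
  · intro q hq
    have hq1 : q.1 = x₀ := mem_singleton_iff.mp hq.1
    have heq : q = (x₀, q.2) := Prod.ext hq1 rfl
    rw [heq]
    exact hv q.2 hq.2

lemma corner_val_horiz (M : ℝ) (hM : 0 < M) (θ : ℝ × ℝ → ℝ)
    (hcont : ContinuousOn θ (Icc (-M) M ×ˢ Icc (0:ℝ) 1))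
    (y₀ : ℝ) (hy₀ : y₀ ∈ Icc (0:ℝ) 1) (v : ℝ)
    (hv : ∀ x ∈ Ioo (-M) M, θ (x, y₀) = v)
    (x₀ : ℝ) (hx₀ : x₀ ∈ Icc (-M) M) : θ (x₀, y₀) = v := by
  apply eq_const_of_closure (T' := Ioo (-M) M ×ˢ ({y₀} : Set ℝ))
    (hcont.continuousWithinAt ⟨hx₀, hy₀⟩)
  · intro q hq
    exact ⟨Ioo_subset_Icc_self hq.1, (mem_singleton_iff.mp hq.2) ▸ hy₀⟩
  · rw [closure_prod_eq, closure_singleton, closure_Ioo (by intro hE; linarith : (-M) ≠ M)]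
    exact ⟨hx₀, rfl⟩
  · intro q hq
    have hq2 : q.2 = y₀ := mem_singleton_iff.mp hq.2
    have heq : q = (q.1, y₀) := Prod.ext rfl hq2
    rw [heq]
    exact hv q.1 hq.1

lemma sin_two_mul_compl (t : ℝ) : Real.sin (2 * (2*π - t)) = -Real.sin (2*t) := by
  have h : 2 * (2*π - t) = (-(2*t)) + 2*π + 2*π := by ring
  rw [h, Real.sin_add_two_pi, Real.sin_add_two_pi, Real.sin_neg]

end P7

open Real Set

/-- Strict bounds `0 < θ < 2π` on `(−M,M) × [0,1]` for a solution of
`Δθ = h sin θ` with boundary conditions `∂_ν θ = −γ sin(2θ)` on the horizontal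
sides, `θ = 0` on `{M} × (0,1)` and `θ = 2π` on `{−M} × (0,1)`, with `0 ≤ θ ≤ 2π`
and `θ` not identically `0` or `2π`. -/
theorem strict_bounds_truncated_minimizer (M h γ : ℝ) (hM : 0 < M) (hh : 0 ≤ h)
    (hγ : 0 < γ) (θ : ℝ × ℝ → ℝ)
    (hC1 : ContDiffOn ℝ 1 θ (Icc (-M) M ×ˢ Icc (0:ℝ) 1))
    (hC2 : ContDiffOn ℝ 2 θ (Ioo (-M) M ×ˢ Ioo (0:ℝ) 1))
    (heq : ∀ x ∈ Ioo (-M) M, ∀ y ∈ Ioo (0:ℝ) 1,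
      deriv (fun x' => deriv (fun x'' => θ (x'', y)) x') x
        + deriv (fun y' => deriv (fun y'' => θ (x, y'')) y') y
        = h * Real.sin (θ (x, y)))
    (hbd : ∀ p ∈ Icc (-M) M ×ˢ Icc (0:ℝ) 1, 0 ≤ θ p ∧ θ p ≤ 2 * π)
    (hneu0 : ∀ x ∈ Ioo (-M) M,
      deriv (fun y => θ (x, y)) 0 = γ * Real.sin (2 * θ (x, 0)))
    (hneu1 : ∀ x ∈ Ioo (-M) M,
      deriv (fun y => θ (x, y)) 1 = -(γ * Real.sin (2 * θ (x, 1))))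
    (hdirR : ∀ y ∈ Ioo (0:ℝ) 1, θ (M, y) = 0)
    (hdirL : ∀ y ∈ Ioo (0:ℝ) 1, θ (-M, y) = 2 * π)
    (hnot0 : ¬ ∀ p ∈ Icc (-M) M ×ˢ Icc (0:ℝ) 1, θ p = 0)
    (hnot2π : ¬ ∀ p ∈ Icc (-M) M ×ˢ Icc (0:ℝ) 1, θ p = 2 * π) :
    ∀ x ∈ Ioo (-M) M, ∀ y ∈ Icc (0:ℝ) 1, 0 < θ (x, y) ∧ θ (x, y) < 2 * π := by
  have hπ : 0 < π := Real.pi_pos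
  have hMM : -M < M := by linarith
  have hΩS : Ioo (-M) M ×ˢ Ioo (0:ℝ) 1 ⊆ Icc (-M) M ×ˢ Icc (0:ℝ) 1 :=
    prod_mono Ioo_subset_Icc_self Ioo_subset_Icc_self
  -- Laplacian inequality for θ
  have hlapθ : ∀ p ∈ Ioo (-M) M ×ˢ Ioo (0:ℝ) 1, lap θ p = h * Real.sin (θ p) := by
    intro p hp
    have := heq p.1 hp.1 p.2 hp.2
    unfold lap
    simpa using this
  have hθΔ : ∀ p ∈ Ioo (-M) M ×ˢ Ioo (0:ℝ) 1, lap θ p ≤ h * θ p := by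
    intro p hp
    rw [hlapθ p hp]
    exact mul_le_mul_of_nonneg_left (Real.sin_le (hbd p (hΩS hp)).1) hh
  have hθnn : ∀ p ∈ Icc (-M) M ×ˢ Icc (0:ℝ) 1, 0 ≤ θ p := fun p hp => (hbd p hp).1
  -- the complementary function u₂ = 2π - θ
  set u₂ : ℝ × ℝ → ℝ := fun p => 2*π - θ p with hu₂def
  have hC1₂ : ContDiffOn ℝ 1 u₂ (Icc (-M) M ×ˢ Icc (0:ℝ) 1) := contDiffOn_const.sub hC1
  have hC2₂ : ContDiffOn ℝ 2 u₂ (Ioo (-M) M ×ˢ Ioo (0:ℝ) 1) := contDiffOn_const.sub hC2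
  have hlap₂ : ∀ p : ℝ × ℝ, lap u₂ p = -lap θ p := by
    intro p
    unfold lap
    have e1 : (fun x' => deriv (fun x'' => u₂ (x'', p.2)) x')
        = fun x' => -deriv (fun x'' => θ (x'', p.2)) x' :=
      funext fun x' => deriv_const_sub _
    have e2 : (fun y' => deriv (fun y'' => u₂ (p.1, y'')) y')
        = fun y' => -deriv (fun y'' => θ (p.1, y'')) y' :=
      funext fun y' => deriv_const_sub _
    rw [e1, e2, deriv.fun_neg, deriv.fun_neg]
    ring
  have hΔ₂ : ∀ p ∈ Ioo (-M) M ×ˢ Ioo (0:ℝ) 1, lap u₂ p ≤ h * u₂ p := by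
    intro p hp
    rw [hlap₂ p, hlapθ p hp]
    have h1 : Real.sin (2*π - θ p) = -Real.sin (θ p) := by
      rw [Real.sin_sub, Real.sin_two_pi, Real.cos_two_pi]; ring
    have h2 : Real.sin (2*π - θ p) ≤ 2*π - θ p :=
      Real.sin_le (by linarith [(hbd p (hΩS hp)).2])
    rw [h1] at h2
    have := mul_le_mul_of_nonneg_left h2 hh
    simp only [hu₂def]
    linarith [mul_le_mul_of_nonneg_left h2 hh]
  have hnn₂ : ∀ p ∈ Icc (-M) M ×ˢ Icc (0:ℝ) 1, 0 ≤ u₂ p := by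
    intro p hp; simp only [hu₂def]; linarith [(hbd p hp).2]
  -- witnesses
  have hwL : θ (-M, 1/2) = 2*π := hdirL (1/2) (by norm_num)
  have hwR : θ (M, 1/2) = 0 := hdirR (1/2) (by norm_num)
  have hmemL : ((-M, 1/2) : ℝ × ℝ) ∈ Icc (-M) M ×ˢ Icc (0:ℝ) 1 :=
    ⟨⟨le_refl _, by linarith⟩, by norm_num⟩
  have hmemR : ((M, 1/2) : ℝ × ℝ) ∈ Icc (-M) M ×ˢ Icc (0:ℝ) 1 :=
    ⟨⟨by linarith, le_refl _⟩, by norm_num⟩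
  -- interior positivity
  have hθpos : ∀ p ∈ Ioo (-M) M ×ˢ Ioo (0:ℝ) 1, 0 < θ p :=
    interior_pos M h hM hh θ hC1.continuousOn hC2 hθΔ hθnn (-M, 1/2) hmemL
      (by rw [hwL]; intro hE; linarith)
  have hpos₂ : ∀ p ∈ Ioo (-M) M ×ˢ Ioo (0:ℝ) 1, 0 < u₂ p :=
    interior_pos M h hM hh u₂ hC1₂.continuousOn hC2₂ hΔ₂ hnn₂ (M, 1/2) hmemR
      (by simp only [hu₂def]; rw [hwR]; intro hE; linarith)
  -- the four edge statements
  have hedge00 : ∀ x ∈ Ioo (-M) M, θ (x, 0) ≠ 0 := by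
    apply edge_no_zero M h γ hM hh hγ θ 0 1 (Or.inl ⟨rfl, rfl⟩) hC1 hC2 hθΔ hθnn hθpos
    · intro x hx _
      rw [one_mul]
      exact hneu0 x hx
    · intro hall
      have c1 : θ (-M, 0) = 0 :=
        corner_val_horiz M hM θ hC1.continuousOn 0 (by norm_num) 0 hall (-M)
          ⟨le_refl _, by linarith⟩
      have c2 : θ (-M, 0) = 2*π :=
        corner_val_vert M hM θ hC1.continuousOn (-M) ⟨le_refl _, by linarith⟩ (2*π) hdirL 0
          (by norm_num)
      rw [c1] at c2
      linarith
  have hedge01 : ∀ x ∈ Ioo (-M) M, u₂ (x, 0) ≠ 0 := by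
    apply edge_no_zero M h γ hM hh hγ u₂ 0 1 (Or.inl ⟨rfl, rfl⟩) hC1₂ hC2₂ hΔ₂ hnn₂ hpos₂
    · intro x hx _
      have e1 : deriv (fun y => u₂ (x, y)) 0 = -deriv (fun y => θ (x, y)) 0 := deriv_const_sub _
      rw [e1, hneu0 x hx]
      simp only [hu₂def]
      rw [sin_two_mul_compl (θ (x,0))]
      ring
    · intro hall
      have hall' : ∀ x ∈ Ioo (-M) M, θ (x, 0) = 2*π := by
        intro x hx
        have := hall x hx
        simp only [hu₂def] at this
        linarith
      have c1 : θ (M, 0) = 2*π :=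
        corner_val_horiz M hM θ hC1.continuousOn 0 (by norm_num) (2*π) hall' M
          ⟨by linarith, le_refl _⟩
      have c2 : θ (M, 0) = 0 :=
        corner_val_vert M hM θ hC1.continuousOn M ⟨by linarith, le_refl _⟩ 0 hdirR 0
          (by norm_num)
      rw [c2] at c1
      linarith
  have hedge10 : ∀ x ∈ Ioo (-M) M, θ (x, 1) ≠ 0 := by
    apply edge_no_zero M h γ hM hh hγ θ 1 (-1) (Or.inr ⟨rfl, rfl⟩) hC1 hC2 hθΔ hθnn hθpos
    · intro x hx _
      rw [hneu1 x hx]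
      ring
    · intro hall
      have c1 : θ (-M, 1) = 0 :=
        corner_val_horiz M hM θ hC1.continuousOn 1 (by norm_num) 0 hall (-M)
          ⟨le_refl _, by linarith⟩
      have c2 : θ (-M, 1) = 2*π :=
        corner_val_vert M hM θ hC1.continuousOn (-M) ⟨le_refl _, by linarith⟩ (2*π) hdirL 1
          (by norm_num)
      rw [c1] at c2
      linarith
  have hedge11 : ∀ x ∈ Ioo (-M) M, u₂ (x, 1) ≠ 0 := by
    apply edge_no_zero M h γ hM hh hγ u₂ 1 (-1) (Or.inr ⟨rfl, rfl⟩) hC1₂ hC2₂ hΔ₂ hnn₂ hpos₂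
    · intro x hx _
      have e1 : deriv (fun y => u₂ (x, y)) 1 = -deriv (fun y => θ (x, y)) 1 := deriv_const_sub _
      rw [e1, hneu1 x hx]
      simp only [hu₂def]
      rw [sin_two_mul_compl (θ (x,1))]
      ring
    · intro hall
      have hall' : ∀ x ∈ Ioo (-M) M, θ (x, 1) = 2*π := by
        intro x hx
        have := hall x hx
        simp only [hu₂def] at this
        linarith
      have c1 : θ (M, 1) = 2*π :=
        corner_val_horiz M hM θ hC1.continuousOn 1 (by norm_num) (2*π) hall' M
          ⟨by linarith, le_refl _⟩
      have c2 : θ (M, 1) = 0 :=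
        corner_val_vert M hM θ hC1.continuousOn M ⟨by linarith, le_refl _⟩ 0 hdirR 1
          (by norm_num)
      rw [c2] at c1
      linarith
  -- conclusion
  intro x hx y hy
  by_cases hy0 : y = 0
  · subst hy0
    have hmem : ((x, 0) : ℝ × ℝ) ∈ Icc (-M) M ×ˢ Icc (0:ℝ) 1 :=
      ⟨Ioo_subset_Icc_self hx, by norm_num⟩
    constructor
    · exact lt_of_le_of_ne (hbd _ hmem).1 (Ne.symm (hedge00 x hx))
    · have h1 := hedge01 x hx
      simp only [hu₂def] at h1
      have h2 := (hbd _ hmem).2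
      rcases lt_or_eq_of_le h2 with h3 | h3
      · exact h3
      · exact absurd (by linarith : 2*π - θ (x,0) = 0) h1
  by_cases hy1 : y = 1
  · subst hy1
    have hmem : ((x, 1) : ℝ × ℝ) ∈ Icc (-M) M ×ˢ Icc (0:ℝ) 1 :=
      ⟨Ioo_subset_Icc_self hx, by norm_num⟩
    constructor
    · exact lt_of_le_of_ne (hbd _ hmem).1 (Ne.symm (hedge10 x hx))
    · have h1 := hedge11 x hx
      simp only [hu₂def] at h1
      have h2 := (hbd _ hmem).2
      rcases lt_or_eq_of_le h2 with h3 | h3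
      · exact h3
      · exact absurd (by linarith : 2*π - θ (x,1) = 0) h1
  · have hyI : y ∈ Ioo (0:ℝ) 1 :=
      ⟨lt_of_le_of_ne hy.1 (Ne.symm hy0), lt_of_le_of_ne hy.2 hy1⟩
    have hmem : ((x, y) : ℝ × ℝ) ∈ Ioo (-M) M ×ˢ Ioo (0:ℝ) 1 := ⟨hx, hyI⟩
    constructor
    · exact hθpos _ hmem
    · have := hpos₂ _ hmem
      simp only [hu₂def] at this
      linarith
end

section
/- For the function θ_ε of the previous context, the trace at y = 0 satisfies sin²θ_ε(x,0) = 1/(1 + csc²(πε) sinh²(π(1−2ε)x)), and consequently ∫_ℝ sin²θ_ε(x,0) dx ≤ C ε for all sufficiently small ε > 0, for some constant C > 0 independent of ε. -/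
open Real Set MeasureTheory

lemma sq_le_sinh_sq (t : ℝ) : t ^ 2 ≤ Real.sinh t ^ 2 := by
  rcases le_or_gt 0 t with h | h
  · have := Real.self_le_sinh_iff.2 h
    nlinarith
  · have h' : (0:ℝ) ≤ -t := by linarith
    have := Real.self_le_sinh_iff.2 h'
    rw [Real.sinh_neg] at this
    nlinarith

lemma key_eq {ε : ℝ} (hε : ε ∈ Ioo (0:ℝ) (1 / 2)) (x : ℝ) :
    Real.sin (π / 2 - Real.arctan (Real.sinh (π * (1 - 2 * ε) * x) /
        Real.sin (π * ε))) ^ 2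
      = 1 / (1 + (1 / Real.sin (π * ε)) ^ 2 * Real.sinh (π * (1 - 2 * ε) * x) ^ 2) := by
  have hs : 0 < Real.sin (π * ε) := by
    apply Real.sin_pos_of_pos_of_lt_pi
    · exact mul_pos Real.pi_pos hε.1
    · nlinarith [Real.pi_pos, hε.1, hε.2]
  set t := Real.sinh (π * (1 - 2 * ε) * x) / Real.sin (π * ε) with ht
  rw [Real.sin_pi_div_two_sub, Real.cos_arctan]
  have h1 : (0:ℝ) < 1 + t ^ 2 := by positivity
  rw [div_pow, one_pow, Real.sq_sqrt h1.le]
  congr 1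
  rw [ht, div_pow]
  field_simp

/-- For `θ_ε(x,0) = π/2 − arctan(sinh(π(1−2ε)x)/sin(πε))`, one has
`sin²θ_ε(x,0) = 1/(1 + csc²(πε) sinh²(π(1−2ε)x))`, and consequently
`∫_ℝ sin²θ_ε(x,0) dx ≤ Cε` for all sufficiently small `ε > 0`. -/
theorem theta_eps_trace_estimate :
    (∀ ε ∈ Ioo (0:ℝ) (1 / 2), ∀ x : ℝ,
      Real.sin (π / 2 - Real.arctan (Real.sinh (π * (1 - 2 * ε) * x) /
          Real.sin (π * ε))) ^ 2
        = 1 / (1 + (1 / Real.sin (π * ε)) ^ 2 * Real.sinh (π * (1 - 2 * ε) * x) ^ 2)) ∧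
    ∃ C : ℝ, 0 < C ∧ ∃ ε₀ ∈ Ioo (0:ℝ) (1 / 2), ∀ ε ∈ Ioo (0:ℝ) ε₀,
      (∫ x : ℝ, Real.sin (π / 2 - Real.arctan (Real.sinh (π * (1 - 2 * ε) * x) /
          Real.sin (π * ε))) ^ 2) ≤ C * ε := by
  constructor
  · exact fun ε hε x => key_eq hε x
  refine ⟨2 * π, by positivity, 1/4, ⟨by norm_num, by norm_num⟩, fun ε hε => ?_⟩
  have hε' : ε ∈ Ioo (0:ℝ) (1/2) := ⟨hε.1, lt_trans hε.2 (by norm_num)⟩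
  have hε4 : ε < 1/4 := hε.2
  have hε0 : 0 < ε := hε.1
  have hs : 0 < Real.sin (π * ε) := by
    apply Real.sin_pos_of_pos_of_lt_pi
    · positivity
    · nlinarith [Real.pi_pos, hε'.1, hε'.2]
  have hbpos : 0 < π * (1 - 2 * ε) := by
    have := Real.pi_pos; nlinarith
  set c : ℝ := π * (1 - 2 * ε) / Real.sin (π * ε) with hc
  have hcpos : 0 < c := div_pos hbpos hs
  set f : ℝ → ℝ := fun x => Real.sin (π / 2 - Real.arctan (Real.sinh (π * (1 - 2 * ε) * x) /
      Real.sin (π * ε))) ^ 2 with hf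
  set g : ℝ → ℝ := fun x => (1 + (c * x) ^ 2)⁻¹ with hg
  have hfle : ∀ x, f x ≤ g x := by
    intro x
    simp only [hf, hg]
    rw [key_eq hε' x]
    rw [one_div]
    apply inv_anti₀
    · positivity
    · have h1 : (c * x) ^ 2 ≤ (1 / Real.sin (π * ε)) ^ 2 * Real.sinh (π * (1 - 2 * ε) * x) ^ 2 := by
        have h2 : (π * (1 - 2 * ε) * x) ^ 2 ≤ Real.sinh (π * (1 - 2 * ε) * x) ^ 2 :=
          sq_le_sinh_sq _
        have h3 : (c * x) ^ 2 = (1 / Real.sin (π * ε)) ^ 2 * (π * (1 - 2 * ε) * x) ^ 2 := by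
          rw [hc]; field_simp
        rw [h3]
        apply mul_le_mul_of_nonneg_left h2 (by positivity)
      linarith
  have hgint : Integrable g := by
    have := integrable_inv_one_add_sq.comp_mul_left' (ne_of_gt hcpos)
    exact this
  have hfint : Integrable f := by
    apply hgint.mono' ?_ ?_
    · apply Continuous.aestronglyMeasurable
      rw [hf]
      exact (Real.continuous_sin.comp (continuous_const.sub
        (Real.continuous_arctan.comp
          ((Real.continuous_sinh.comp (continuous_const.mul continuous_id)).div_const _)))).pow 2
    · filter_upwards with x
      rw [Real.norm_eq_abs, abs_of_nonneg (sq_nonneg _)]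
      exact hfle x
  have hmono : (∫ x, f x) ≤ ∫ x, g x := integral_mono hfint hgint hfle
  have hgval : (∫ x, g x) = |c⁻¹| * π := by
    have := MeasureTheory.Measure.integral_comp_mul_left (fun y : ℝ => (1 + y ^ 2)⁻¹) c
    rw [hg]
    simp only [mul_pow] at this ⊢
    rw [show (fun x : ℝ => (1 + c ^ 2 * x ^ 2)⁻¹) = fun x : ℝ => (1 + (c * x) ^ 2)⁻¹ by
      funext x; ring_nf] at *
    calc (∫ x : ℝ, (1 + (c * x) ^ 2)⁻¹) = |c⁻¹| • ∫ y : ℝ, (1 + y ^ 2)⁻¹ := by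
          simpa [mul_pow] using this
      _ = |c⁻¹| * π := by rw [integral_univ_inv_one_add_sq]; rfl
  have hfinal : |c⁻¹| * π ≤ 2 * π * ε := by
    rw [abs_of_nonneg (by positivity : (0:ℝ) ≤ c⁻¹)]
    have hsin_le : Real.sin (π * ε) ≤ π * ε := Real.sin_le (by positivity)
    have hbge : π / 2 ≤ π * (1 - 2 * ε) := by
      have := Real.pi_pos; nlinarith
    have hcge : 1 / (2 * ε) ≤ c := by
      rw [hc]
      have h1 : Real.sin (π * ε) ≤ π * ε := hsin_le
      rw [div_le_div_iff₀ (by positivity) hs]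
      calc 1 * Real.sin (π * ε) ≤ π * ε := by linarith
        _ ≤ π * (1 - 2 * ε) * (2 * ε) := by nlinarith
    have hcinv : c⁻¹ ≤ 2 * ε := by
      have h1 : (2 * ε)⁻¹ ≤ c := by rw [← one_div]; exact hcge
      have h2 := inv_anti₀ (by positivity : (0:ℝ) < (2 * ε)⁻¹) h1
      simpa using h2
    nlinarith [Real.pi_pos]
  calc (∫ x : ℝ, Real.sin (π / 2 - Real.arctan (Real.sinh (π * (1 - 2 * ε) * x) /
          Real.sin (π * ε))) ^ 2) = ∫ x, f x := rfl
    _ ≤ ∫ x, g x := hmono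
    _ = |c⁻¹| * π := hgval
    _ ≤ 2 * π * ε := hfinal
    _ = 2 * π * ε := rfl
end
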